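/- arXiv:2304.01560 — 7 statements merged into one kernel-verified Lean document; each statement's English description precedes it below -/
import Mathlib

section
/- Let f : [0,1] → ℝ have bounded variation on [0,1]. For any integers j ≥ 0 and 0 ≤ k ≤ 2^j − 1, the Haar coefficient of f at scale j and location k satisfies |θ_{j,k}(f)| ≤ 2^{−j/2 − 1} · V_{j,k}(f), where V_{j,k}(f) denotes the total variation of f on the dyadic interval [k·2^{−j}, (k+1)·2^{−j}]. -/
open MeasureTheory

/-- The Haar mother wavelet. -/
noncomputable def haarMother (x : ℝ) : ℝ :=
  if 0 ≤ x ∧ x < 1/2 then 1 else if 1/2 ≤ x ∧ x < 1 then -1 else 0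

/-- The Haar child wavelet at scale `j` and location `k`. -/
noncomputable def haarChild (j k : ℕ) (x : ℝ) : ℝ :=
  (2:ℝ) ^ ((j:ℝ)/2) * haarMother ((2:ℝ)^(j:ℕ) * x - (k:ℝ))

/-- The Haar coefficient of `f` at scale `j` and location `k`. -/
noncomputable def haarCoeff (j k : ℕ) (f : ℝ → ℝ) : ℝ :=
  ∫ x in (0:ℝ)..1, f x * haarChild j k x

lemma haarMother_of_neg {t : ℝ} (ht : t < 0) : haarMother t = 0 := by
  unfold haarMother
  rw [if_neg (by rintro ⟨h1, -⟩; linarith), if_neg (by rintro ⟨h1, -⟩; linarith)]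

lemma haarMother_of_ge {t : ℝ} (ht : 1 ≤ t) : haarMother t = 0 := by
  unfold haarMother
  rw [if_neg (by rintro ⟨-, h2⟩; linarith), if_neg (by rintro ⟨-, h2⟩; linarith)]

lemma haarMother_one {t : ℝ} (h0 : 0 ≤ t) (h1 : t < 1/2) : haarMother t = 1 := by
  unfold haarMother; rw [if_pos ⟨h0, h1⟩]

lemma haarMother_neg_one {t : ℝ} (h0 : 1/2 ≤ t) (h1 : t < 1) : haarMother t = -1 := by
  unfold haarMother
  rw [if_neg (by rintro ⟨-, h2⟩; linarith), if_pos ⟨h0, h1⟩]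


set_option maxHeartbeats 1600000 in
/-- If `f : [0,1] → ℝ` has bounded variation on `[0,1]`, then for all `j ≥ 0` and
`0 ≤ k ≤ 2^j - 1`, the Haar coefficient satisfies
`|θ_{j,k}(f)| ≤ 2^{-j/2-1} · V_{j,k}(f)`, where `V_{j,k}(f)` is the total variation of `f`
on the dyadic interval `[k·2^{-j}, (k+1)·2^{-j}]`. -/
theorem haar_coeff_le_local_variation
    (f : ℝ → ℝ) (hf : eVariationOn f (Set.Icc (0:ℝ) 1) ≠ ⊤)
    (j k : ℕ) (hk : k ≤ 2 ^ j - 1) :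
    |haarCoeff j k f| ≤
      (2:ℝ) ^ (-(j:ℝ)/2 - 1) *
        (eVariationOn f
          (Set.Icc ((k:ℝ) * (2:ℝ) ^ (-(j:ℝ))) (((k:ℝ) + 1) * (2:ℝ) ^ (-(j:ℝ))))).toReal := by
  set n : ℝ := (2:ℝ) ^ (j:ℕ) with hn
  set c : ℝ := (2:ℝ) ^ ((j:ℝ)/2) with hc
  set a : ℝ := (k:ℝ) / n with ha
  set hh : ℝ := (2*n)⁻¹ with hhdef
  set m : ℝ := a + hh with hm
  set b : ℝ := a + 2*hh with hb
  clear_value n c a hh m b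
  have hn0 : (0:ℝ) < n := by rw [hn]; positivity
  have hc0 : (0:ℝ) < c := by rw [hc]; positivity
  have hh0 : (0:ℝ) < hh := by rw [hhdef]; positivity
  have hbeq : b = ((k:ℝ) + 1) / n := by
    rw [hb, ha, hhdef]; field_simp
  have hk' : (k:ℝ) + 1 ≤ n := by
    have h1 : 1 ≤ 2 ^ j := Nat.one_le_two_pow
    have h2 : k + 1 ≤ 2 ^ j := by omega
    rw [hn]
    exact_mod_cast h2
  have ha0 : (0:ℝ) ≤ a := by rw [ha]; positivity
  have hb1 : b ≤ 1 := by
    rw [hbeq, div_le_one hn0]; exact hk'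
  have ham : a < m := by rw [hm]; linarith
  have hmb : m < b := by rw [hm, hb]; linarith
  -- rpow arithmetic
  have hpow : (2:ℝ) ^ (-(j:ℝ)) = n⁻¹ := by
    rw [Real.rpow_neg (by norm_num), Real.rpow_natCast, hn]
  have hA : (k:ℝ) * (2:ℝ) ^ (-(j:ℝ)) = a := by rw [hpow, ha]; ring
  have hB : ((k:ℝ) + 1) * (2:ℝ) ^ (-(j:ℝ)) = b := by rw [hpow, hbeq]; ring
  have hch : c * hh = (2:ℝ) ^ (-(j:ℝ)/2 - 1) := by
    rw [hc, hhdef, hn, show ((2:ℝ)^(j:ℕ)) = (2:ℝ) ^ ((j:ℝ)) from by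
      rw [Real.rpow_natCast],
      show (2:ℝ) * (2:ℝ) ^ ((j:ℝ)) = (2:ℝ) ^ ((j:ℝ) + 1) from by
      rw [Real.rpow_add (by norm_num), Real.rpow_one]; ring,
      ← Real.rpow_neg (by norm_num : (0:ℝ) ≤ 2), ← Real.rpow_add (by norm_num : (0:ℝ) < 2)]
    congr 1; ring
  rw [hA, hB]
  set C : ℝ := (eVariationOn f (Set.Icc a b)).toReal with hC
  have hC0 : 0 ≤ C := ENNReal.toReal_nonneg
  have hsub : Set.Icc a b ⊆ Set.Icc (0:ℝ) 1 := Set.Icc_subset_Icc ha0 hb1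
  have hVfin : eVariationOn f (Set.Icc a b) ≠ ⊤ :=
    ne_top_of_le_ne_top hf (eVariationOn.mono f hsub)
  -- pointwise variation bound
  have hbd : ∀ x ∈ Set.Icc a m, |f x - f (x + hh)| ≤ C := by
    intro x hx
    have hx2' : x ≤ m := hx.2
    rw [hm] at hx2'
    have hx1 : x ∈ Set.Icc a b := ⟨hx.1, by rw [hb]; linarith⟩
    have hx2 : x + hh ∈ Set.Icc a b := ⟨by linarith [hx.1], by rw [hb]; linarith⟩
    have hedist := eVariationOn.edist_le f hx1 hx2
    have hd : dist (f x) (f (x + hh)) = (edist (f x) (f (x + hh))).toReal := by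
      rw [edist_dist, ENNReal.toReal_ofReal dist_nonneg]
    rw [← Real.dist_eq, hd, hC]
    exact ENNReal.toReal_mono hVfin hedist
  -- integrability of f on subintervals
  obtain ⟨p, q, hp, hq, hpq⟩ :=
    LocallyBoundedVariationOn.exists_monotoneOn_sub_monotoneOn
      (BoundedVariationOn.locallyBoundedVariationOn hf)
  have hfint : ∀ u v : ℝ, u ≤ v → Set.Icc u v ⊆ Set.Icc (0:ℝ) 1 →
      IntervalIntegrable f volume u v := by
    intro u v huv hsub'
    have huIcc : Set.uIcc u v ⊆ Set.Icc (0:ℝ) 1 := by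
      rw [Set.uIcc_of_le huv]; exact hsub'
    have hfeq : f = fun x => p x - q x := by rw [hpq]; rfl
    rw [hfeq]
    exact ((hp.mono huIcc).intervalIntegrable).sub ((hq.mono huIcc).intervalIntegrable)
  have hfam : IntervalIntegrable f volume a m :=
    hfint a m ham.le ((Set.Icc_subset_Icc_right hmb.le).trans hsub)
  have hfmb : IntervalIntegrable f volume m b :=
    hfint m b hmb.le ((Set.Icc_subset_Icc_left ham.le).trans hsub)
  have hcomp : IntervalIntegrable (fun x => f (x + hh)) volume a m := by
    have h1 := hfmb.comp_add_right hh
    have e1 : m - hh = a := by rw [hm]; ring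
    have e2 : b - hh = m := by rw [hb, hm]; ring
    rwa [e1, e2] at h1
  -- key congruence helper
  have key : ∀ (u v : ℝ) (g : ℝ → ℝ), IntervalIntegrable g volume u v →
      (∀ᵐ x ∂(volume : Measure ℝ), x ∈ Set.uIoc u v → f x * haarChild j k x = g x) →
      IntervalIntegrable (fun x => f x * haarChild j k x) volume u v ∧
        (∫ x in u..v, f x * haarChild j k x) = ∫ x in u..v, g x := by
    intro u v g hg hae
    have h' : g =ᵐ[volume.restrict (Set.uIoc u v)] fun x => f x * haarChild j k x := by
      show ∀ᵐ x ∂(volume.restrict (Set.uIoc u v)), g x = f x * haarChild j k x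
      rw [MeasureTheory.ae_restrict_iff' measurableSet_uIoc]
      filter_upwards [hae] with x hx hmem using (hx hmem).symm
    exact ⟨hg.congr_ae h', intervalIntegral.integral_congr_ae hae⟩
  -- a.e. facts about single points
  have hne : ∀ z : ℝ, ∀ᵐ x ∂(volume : Measure ℝ), x ≠ z := by
    intro z
    have h0 : (volume : Measure ℝ) {z} = 0 := Real.volume_singleton
    filter_upwards [measure_eq_zero_iff_ae_notMem.mp h0] with x hx
    simpa using hx
  -- products with the dyadic scale
  have hna : n * a = (k:ℝ) := by rw [ha]; field_simp
  have hnm : n * m = (k:ℝ) + 1/2 := by rw [hm, ha, hhdef]; field_simp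
  have hnb : n * b = (k:ℝ) + 1 := by rw [hb, ha, hhdef]; field_simp
  -- piece 1 : [0,a]
  obtain ⟨i1, e1⟩ := key 0 a 0 intervalIntegrable_const (by
    filter_upwards [hne a] with x hxa hx
    rw [Set.uIoc_of_le ha0] at hx
    have hxlt : x < a := lt_of_le_of_ne hx.2 hxa
    have ht : n * x - (k:ℝ) < 0 := by nlinarith [mul_pos hn0 (sub_pos.mpr hxlt)]
    rw [hn] at ht
    simp [haarChild, haarMother_of_neg ht])
  -- piece 2 : [a,m]
  obtain ⟨i2, e2⟩ := key a m (fun x => c * f x) (hfam.const_mul c) (by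
    filter_upwards [hne m] with x hxm hx
    rw [Set.uIoc_of_le ham.le] at hx
    have hxlt : x < m := lt_of_le_of_ne hx.2 hxm
    have h1 : (0:ℝ) ≤ n * x - (k:ℝ) := by nlinarith [mul_pos hn0 (sub_pos.mpr hx.1)]
    have h2 : n * x - (k:ℝ) < 1/2 := by nlinarith [mul_pos hn0 (sub_pos.mpr hxlt)]
    rw [hn] at h1 h2
    simp only [haarChild, haarMother_one h1 h2, mul_one, ← hc]
    ring)
  -- piece 3 : [m,b]
  obtain ⟨i3, e3⟩ := key m b (fun x => -c * f x) (hfmb.const_mul (-c)) (by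
    filter_upwards [hne b] with x hxb hx
    rw [Set.uIoc_of_le hmb.le] at hx
    have hxlt : x < b := lt_of_le_of_ne hx.2 hxb
    have h1 : (1:ℝ)/2 ≤ n * x - (k:ℝ) := by nlinarith [mul_pos hn0 (sub_pos.mpr hx.1)]
    have h2 : n * x - (k:ℝ) < 1 := by nlinarith [mul_pos hn0 (sub_pos.mpr hxlt)]
    rw [hn] at h1 h2
    simp only [haarChild, haarMother_neg_one h1 h2, ← hc]
    ring)
  -- piece 4 : [b,1]
  obtain ⟨i4, e4⟩ := key b 1 0 intervalIntegrable_const (by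
    filter_upwards with x hx
    rw [Set.uIoc_of_le hb1] at hx
    have ht : (1:ℝ) ≤ n * x - (k:ℝ) := by nlinarith [mul_pos hn0 (sub_pos.mpr hx.1)]
    rw [hn] at ht
    simp [haarChild, haarMother_of_ge ht])
  -- assemble
  have hsplit : haarCoeff j k f =
      (∫ x in (0:ℝ)..a, f x * haarChild j k x) + ((∫ x in a..m, f x * haarChild j k x) +
        ((∫ x in m..b, f x * haarChild j k x) + ∫ x in b..(1:ℝ), f x * haarChild j k x)) := by
    rw [intervalIntegral.integral_add_adjacent_intervals i3 i4,
      intervalIntegral.integral_add_adjacent_intervals i2 (i3.trans i4),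
      intervalIntegral.integral_add_adjacent_intervals i1 ((i2.trans i3).trans i4), haarCoeff]
  have hzero : ∀ u v : ℝ, (∫ x in u..v, (0:ℝ→ℝ) x) = 0 := by intro u v; simp
  have hval : haarCoeff j k f =
      c * ((∫ x in a..m, f x) - ∫ x in m..b, f x) := by
    rw [hsplit, e1, e2, e3, e4, hzero, hzero,
      intervalIntegral.integral_const_mul, intervalIntegral.integral_const_mul]
    ring
  have hshift : (∫ x in a..m, f (x + hh)) = ∫ x in m..b, f x := by
    rw [intervalIntegral.integral_comp_add_right]
    congr 1
    · rw [hm]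
    · rw [hb, hm]; ring
  have hdiff : (∫ x in a..m, (f x - f (x + hh))) = (∫ x in a..m, f x) - ∫ x in m..b, f x := by
    rw [intervalIntegral.integral_sub hfam hcomp, hshift]
  have hboundI : |∫ x in a..m, (f x - f (x + hh))| ≤ C * |m - a| := by
    have hb' := intervalIntegral.norm_integral_le_of_norm_le_const (C := C)
      (f := fun x => f x - f (x + hh)) (a := a) (b := m) ?_
    · simpa using hb'
    · intro x hx
      rw [Set.uIoc_of_le ham.le] at hx
      simpa using hbd x ⟨hx.1.le, hx.2⟩
  have hma : |m - a| = hh := by rw [hm, abs_of_nonneg (by linarith)]; ring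
  calc |haarCoeff j k f| = c * |∫ x in a..m, (f x - f (x + hh))| := by
        rw [hval, hdiff, abs_mul, abs_of_pos hc0]
    _ ≤ c * (C * hh) := by
        have hboundI' : |∫ x in a..m, (f x - f (x + hh))| ≤ C * hh := by rwa [hma] at hboundI
        exact mul_le_mul_of_nonneg_left hboundI' hc0.le
    _ = (2:ℝ) ^ (-(j:ℝ)/2 - 1) * C := by rw [← hch]; ring
end

section
/- Let f : [0,1] → ℝ have total variation TV(f) on [0,1]. Then for every integer j ≥ 0, the sum of the absolute values of the Haar coefficients of f at scale j satisfies Σ_{k=0}^{2^j − 1} |θ_{j,k}(f)| ≤ 2^{−j/2 − 1} · TV(f). -/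
open MeasureTheory

lemma haarChild_eq (j k : ℕ) (x : ℝ) :
    haarChild j k x = (2:ℝ)^((j:ℝ)/2) *
      ((Set.Ico ((k:ℝ)/2^j) (((k:ℝ)+1/2)/2^j)).indicator (fun _ => (1:ℝ)) x
       - (Set.Ico (((k:ℝ)+1/2)/2^j) (((k:ℝ)+1)/2^j)).indicator (fun _ => (1:ℝ)) x) := by
  have hc : (0:ℝ) < 2^j := by positivity
  have m1 : ((k:ℝ)/2^j ≤ x ∧ x < ((k:ℝ)+1/2)/2^j) ↔
      (0 ≤ (2:ℝ)^(j:ℕ) * x - (k:ℝ) ∧ (2:ℝ)^(j:ℕ) * x - (k:ℝ) < 1/2) := by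
    rw [div_le_iff₀ hc, lt_div_iff₀ hc]
    constructor <;> rintro ⟨u, v⟩ <;> constructor <;> nlinarith
  have m2 : (((k:ℝ)+1/2)/2^j ≤ x ∧ x < ((k:ℝ)+1)/2^j) ↔
      (1/2 ≤ (2:ℝ)^(j:ℕ) * x - (k:ℝ) ∧ (2:ℝ)^(j:ℕ) * x - (k:ℝ) < 1) := by
    rw [div_le_iff₀ hc, lt_div_iff₀ hc]
    constructor <;> rintro ⟨u, v⟩ <;> constructor <;> nlinarith
  unfold haarChild haarMother
  simp only [Set.indicator_apply, Set.mem_Ico, m1, m2]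
  split_ifs with h1 h2 <;> [ (exact absurd h2.1 (by linarith [h1.2])); ring; ring; ring ]

lemma vol_inter (u v : ℝ) (hu : 0 ≤ u) (hv : v ≤ 1) :
    MeasureTheory.volume (Set.Ico u v ∩ Set.Ioc (0:ℝ) 1) = ENNReal.ofReal (v - u) := by
  apply le_antisymm
  · calc volume (Set.Ico u v ∩ Set.Ioc (0:ℝ) 1) ≤ volume (Set.Ico u v) :=
          measure_mono Set.inter_subset_left
      _ = ENNReal.ofReal (v - u) := Real.volume_Ico
  · have hsub : Set.Ioo u v ⊆ Set.Ico u v ∩ Set.Ioc (0:ℝ) 1 := fun x hx =>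
      ⟨⟨le_of_lt hx.1, hx.2⟩, lt_of_le_of_lt hu hx.1, le_trans (le_of_lt hx.2) hv⟩
    calc ENNReal.ofReal (v - u) = volume (Set.Ioo u v) := Real.volume_Ioo.symm
      _ ≤ _ := measure_mono hsub

lemma rpow_arith (j : ℕ) :
    (2:ℝ)^((j:ℝ)/2) * ((1:ℝ)/2/2^j) = (2:ℝ)^(-(j:ℝ)/2 - 1) := by
  have h1 : ((2:ℝ)^(j:ℕ)) = (2:ℝ)^((j:ℝ)) := (Real.rpow_natCast 2 j).symm
  have h2 : (1:ℝ)/2/(2:ℝ)^((j:ℝ)) = (2:ℝ)^(-(j:ℝ)) * (2:ℝ)^(-(1:ℝ)) := by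
    rw [Real.rpow_neg (by norm_num), Real.rpow_neg (by norm_num), Real.rpow_one]
    field_simp
  rw [h1, h2, ← Real.rpow_add two_pos, ← Real.rpow_add two_pos]
  congr 1
  ring

lemma haarCoeff_abs_le (f : ℝ → ℝ)
    (hInt : MeasureTheory.IntegrableOn f (Set.Icc (0:ℝ) 1))
    (hBV : BoundedVariationOn f (Set.Icc (0:ℝ) 1))
    (j k : ℕ) (hk : k < 2^j) :
    |haarCoeff j k f| ≤ (2:ℝ)^(-(j:ℝ)/2 - 1) *
      ((eVariationOn f (Set.Icc ((k:ℝ)/2^j) (((k:ℝ)+1/2)/2^j))).toReal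
       + (eVariationOn f (Set.Icc (((k:ℝ)+1/2)/2^j) (((k:ℝ)+1)/2^j))).toReal) := by
  have hc : (0:ℝ) < 2^j := by positivity
  set a := (k:ℝ)/2^j with ha
  set m := ((k:ℝ)+1/2)/2^j with hm
  set b := ((k:ℝ)+1)/2^j with hb
  set δ := (1:ℝ)/2/(2:ℝ)^j with hδdef
  have hδ0 : 0 ≤ δ := by positivity
  have h0a : 0 ≤ a := by positivity
  have ham : a ≤ m := by rw [ha, hm]; gcongr; linarith
  have hmb : m ≤ b := by rw [hm, hb]; gcongr <;> linarith
  have hk1 : (k:ℝ) + 1 ≤ 2^j := by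
    have : ((k+1:ℕ):ℝ) ≤ ((2^j:ℕ):ℝ) := by exact_mod_cast hk
    push_cast at this; linarith
  have hb1 : b ≤ 1 := by rw [hb, div_le_one hc]; linarith
  have hm1 : m ≤ 1 := le_trans hmb hb1
  have hsubL : Set.Icc a m ⊆ Set.Icc (0:ℝ) 1 := Set.Icc_subset_Icc h0a hm1
  have hsubR : Set.Icc m b ⊆ Set.Icc (0:ℝ) 1 := Set.Icc_subset_Icc (le_trans h0a ham) hb1
  have hBVL : BoundedVariationOn f (Set.Icc a m) := hBV.mono hsubL
  have hBVR : BoundedVariationOn f (Set.Icc m b) := hBV.mono hsubR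
  set CL := (eVariationOn f (Set.Icc a m)).toReal with hCL
  set CR := (eVariationOn f (Set.Icc m b)).toReal with hCR
  set c := f m with hcdef
  have hmL : m ∈ Set.Icc a m := ⟨ham, le_rfl⟩
  have hmR : m ∈ Set.Icc m b := ⟨le_rfl, hmb⟩
  have hptL : ∀ x ∈ Set.Icc a m, |f x - c| ≤ CL := fun x hx => by
    rw [← Real.dist_eq]; exact hBVL.dist_le hx hmL
  have hptR : ∀ x ∈ Set.Icc m b, |f x - c| ≤ CR := fun x hx => by
    rw [← Real.dist_eq]; exact hBVR.dist_le hx hmR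
  set SL := Set.Ico a m ∩ Set.Ioc (0:ℝ) 1 with hSL
  set SR := Set.Ico m b ∩ Set.Ioc (0:ℝ) 1 with hSR
  have hmesL : MeasurableSet SL := measurableSet_Ico.inter measurableSet_Ioc
  have hmesR : MeasurableSet SR := measurableSet_Ico.inter measurableSet_Ioc
  have hvolL : volume SL = ENNReal.ofReal δ := by
    rw [hSL, vol_inter a m h0a hm1]; congr 1; rw [ha, hm, hδdef]; ring
  have hvolR : volume SR = ENNReal.ofReal δ := by
    rw [hSR, vol_inter m b (le_trans h0a ham) hb1]; congr 1; rw [hm, hb, hδdef]; ring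
  have hIntL : IntegrableOn f SL := hInt.mono_set
    (Set.inter_subset_right.trans Set.Ioc_subset_Icc_self)
  have hIntR : IntegrableOn f SR := hInt.mono_set
    (Set.inter_subset_right.trans Set.Ioc_subset_Icc_self)
  -- rewrite the Haar coefficient
  have hrw : ∀ x, f x * haarChild j k x =
      (2:ℝ)^((j:ℝ)/2) * ((Set.Ico a m).indicator f x - (Set.Ico m b).indicator f x) := by
    intro x
    rw [haarChild_eq]
    simp only [Set.indicator_apply]
    split_ifs <;> ring
  have hL' : IntegrableOn f (Set.Ico a m) (volume.restrict (Set.Ioc (0:ℝ) 1)) := by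
    rw [IntegrableOn, Measure.restrict_restrict measurableSet_Ico]; exact hIntL
  have hR' : IntegrableOn f (Set.Ico m b) (volume.restrict (Set.Ioc (0:ℝ) 1)) := by
    rw [IntegrableOn, Measure.restrict_restrict measurableSet_Ico]; exact hIntR
  have hθ : haarCoeff j k f =
      (2:ℝ)^((j:ℝ)/2) * ((∫ x in SL, f x) - ∫ x in SR, f x) := by
    rw [haarCoeff, intervalIntegral.integral_of_le zero_le_one]
    simp only [hrw]
    rw [MeasureTheory.integral_const_mul]
    rw [integral_sub (hL'.integrable_indicator measurableSet_Ico)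
        (hR'.integrable_indicator measurableSet_Ico)]
    rw [integral_indicator measurableSet_Ico, integral_indicator measurableSet_Ico,
        Measure.restrict_restrict measurableSet_Ico, Measure.restrict_restrict measurableSet_Ico]
  have hconstL : ∫ x in SL, (c : ℝ) = δ * c := by
    rw [setIntegral_const, measureReal_def, hvolL, ENNReal.toReal_ofReal hδ0, smul_eq_mul]
  have hconstR : ∫ x in SR, (c : ℝ) = δ * c := by
    rw [setIntegral_const, measureReal_def, hvolR, ENNReal.toReal_ofReal hδ0, smul_eq_mul]
  have hsplitL : ∫ x in SL, f x = (∫ x in SL, (f x - c)) + δ * c := by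
    rw [integral_sub hIntL (integrableOn_const (by rw [hvolL]; exact ENNReal.ofReal_ne_top)), hconstL]
    ring
  have hsplitR : ∫ x in SR, f x = (∫ x in SR, (f x - c)) + δ * c := by
    rw [integral_sub hIntR (integrableOn_const (by rw [hvolR]; exact ENNReal.ofReal_ne_top)), hconstR]
    ring
  have hnormL : |∫ x in SL, (f x - c)| ≤ CL * δ := by
    have := norm_setIntegral_le_of_norm_le_const (μ := volume) (s := SL)
      (by rw [hvolL]; exact ENNReal.ofReal_lt_top)
      (f := fun x => f x - c) (C := CL)
      (fun x hx => by
        rw [Real.norm_eq_abs]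
        exact hptL x (Set.Ico_subset_Icc_self (Set.inter_subset_left hx)))
    rw [Real.norm_eq_abs, measureReal_def, hvolL, ENNReal.toReal_ofReal hδ0] at this
    exact this
  have hnormR : |∫ x in SR, (f x - c)| ≤ CR * δ := by
    have := norm_setIntegral_le_of_norm_le_const (μ := volume) (s := SR)
      (by rw [hvolR]; exact ENNReal.ofReal_lt_top)
      (f := fun x => f x - c) (C := CR)
      (fun x hx => by
        rw [Real.norm_eq_abs]
        exact hptR x (Set.Ico_subset_Icc_self (Set.inter_subset_left hx)))
    rw [Real.norm_eq_abs, measureReal_def, hvolR, ENNReal.toReal_ofReal hδ0] at this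
    exact this
  have hp0 : (0:ℝ) ≤ (2:ℝ)^((j:ℝ)/2) := le_of_lt (Real.rpow_pos_of_pos two_pos _)
  calc |haarCoeff j k f|
      = (2:ℝ)^((j:ℝ)/2) * |(∫ x in SL, (f x - c)) - ∫ x in SR, (f x - c)| := by
        rw [hθ, hsplitL, hsplitR, abs_mul, abs_of_nonneg hp0]
        congr 2
        ring
    _ ≤ (2:ℝ)^((j:ℝ)/2) * (CL * δ + CR * δ) := by
        apply mul_le_mul_of_nonneg_left _ hp0
        calc |(∫ x in SL, (f x - c)) - ∫ x in SR, (f x - c)|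
            ≤ |∫ x in SL, (f x - c)| + |∫ x in SR, (f x - c)| := abs_sub _ _
          _ ≤ CL * δ + CR * δ := add_le_add hnormL hnormR
    _ = ((2:ℝ)^((j:ℝ)/2) * δ) * (CL + CR) := by ring
    _ = (2:ℝ)^(-(j:ℝ)/2 - 1) * (CL + CR) := by rw [hδdef, rpow_arith]


lemma sum_eVar_le (f : ℝ → ℝ) (TV : ℝ)
    (hTV : eVariationOn f (Set.Icc (0:ℝ) 1) = ENNReal.ofReal TV) (j : ℕ) :
    ∑ k ∈ Finset.range (2^j),
      (eVariationOn f (Set.Icc ((k:ℝ)/2^j) (((k:ℝ)+1/2)/2^j))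
        + eVariationOn f (Set.Icc (((k:ℝ)+1/2)/2^j) (((k:ℝ)+1)/2^j)))
      ≤ ENNReal.ofReal TV := by
  have hc : (0:ℝ) < 2^j := by positivity
  have key : ∀ N : ℕ, ∑ k ∈ Finset.range N,
      (eVariationOn f (Set.Icc ((k:ℝ)/2^j) (((k:ℝ)+1/2)/2^j))
        + eVariationOn f (Set.Icc (((k:ℝ)+1/2)/2^j) (((k:ℝ)+1)/2^j)))
      ≤ eVariationOn f (Set.Icc (0:ℝ) ((N:ℝ)/2^j)) := by
    intro N
    induction N with
    | zero => simp
    | succ N ih =>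
      rw [Finset.sum_range_succ]
      have h1 : (N:ℝ)/2^j ≤ ((N:ℝ)+1/2)/2^j := by gcongr; linarith
      have h2 : ((N:ℝ)+1/2)/2^j ≤ ((N:ℝ)+1)/2^j := by gcongr <;> linarith
      have h0 : (0:ℝ) ≤ (N:ℝ)/2^j := by positivity
      have e1 := eVariationOn.Icc_add_Icc f (s := Set.univ) h1 h2 (Set.mem_univ _)
      have e2 := eVariationOn.Icc_add_Icc f (s := Set.univ) h0 (le_trans h1 h2) (Set.mem_univ _)
      simp only [Set.univ_inter] at e1 e2
      have hcast : ((N+1:ℕ):ℝ) = (N:ℝ)+1 := by push_cast; ring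
      rw [hcast]
      calc ∑ k ∈ Finset.range N,
            (eVariationOn f (Set.Icc ((k:ℝ)/2^j) (((k:ℝ)+1/2)/2^j))
              + eVariationOn f (Set.Icc (((k:ℝ)+1/2)/2^j) (((k:ℝ)+1)/2^j)))
            + (eVariationOn f (Set.Icc ((N:ℝ)/2^j) (((N:ℝ)+1/2)/2^j))
              + eVariationOn f (Set.Icc (((N:ℝ)+1/2)/2^j) (((N:ℝ)+1)/2^j)))
          ≤ eVariationOn f (Set.Icc (0:ℝ) ((N:ℝ)/2^j))
            + (eVariationOn f (Set.Icc ((N:ℝ)/2^j) (((N:ℝ)+1/2)/2^j))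
              + eVariationOn f (Set.Icc (((N:ℝ)+1/2)/2^j) (((N:ℝ)+1)/2^j))) :=
            add_le_add_left ih _
        _ = eVariationOn f (Set.Icc (0:ℝ) (((N:ℝ)+1)/2^j)) := by rw [e1, e2]
  have h := key (2^j)
  have hone : ((2^j:ℕ):ℝ)/2^j = 1 := by push_cast; field_simp
  rw [hone, hTV] at h
  exact h

/-- If `f : [0,1] → ℝ` has total variation `TV` on `[0,1]`, then for every `j ≥ 0`,
`Σ_{k=0}^{2^j-1} |θ_{j,k}(f)| ≤ 2^{-j/2-1} · TV`. -/
theorem haar_coeff_scale_sum_le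
    (f : ℝ → ℝ) (TV : ℝ) (hTV0 : 0 ≤ TV)
    (hTV : eVariationOn f (Set.Icc (0:ℝ) 1) = ENNReal.ofReal TV)
    (j : ℕ) :
    ∑ k ∈ Finset.range (2 ^ j), |haarCoeff j k f| ≤ (2:ℝ) ^ (-(j:ℝ)/2 - 1) * TV := by
  have hBV : BoundedVariationOn f (Set.Icc (0:ℝ) 1) := by
    rw [BoundedVariationOn, hTV]; exact ENNReal.ofReal_ne_top
  have hInt : IntegrableOn f (Set.Icc (0:ℝ) 1) := by
    obtain ⟨P, Q, hP, hQ, hPQ⟩ := hBV.locallyBoundedVariationOn.exists_monotoneOn_sub_monotoneOn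
    rw [hPQ]
    exact (hP.integrableOn_isCompact isCompact_Icc).sub (hQ.integrableOn_isCompact isCompact_Icc)
  have hsum := sum_eVar_le f TV hTV j
  have hfin : ∀ k ∈ Finset.range (2^j),
      (eVariationOn f (Set.Icc ((k:ℝ)/2^j) (((k:ℝ)+1/2)/2^j))
        + eVariationOn f (Set.Icc (((k:ℝ)+1/2)/2^j) (((k:ℝ)+1)/2^j))) ≠ ⊤ := fun k hk =>
    ne_top_of_le_ne_top ENNReal.ofReal_ne_top
      (le_trans (Finset.single_le_sum (f := fun k : ℕ =>
        (eVariationOn f (Set.Icc ((k:ℝ)/2^j) (((k:ℝ)+1/2)/2^j))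
          + eVariationOn f (Set.Icc (((k:ℝ)+1/2)/2^j) (((k:ℝ)+1)/2^j))))
        (fun i _ => zero_le) hk) hsum)
  calc ∑ k ∈ Finset.range (2^j), |haarCoeff j k f|
      ≤ ∑ k ∈ Finset.range (2^j), (2:ℝ)^(-(j:ℝ)/2 - 1) *
          ((eVariationOn f (Set.Icc ((k:ℝ)/2^j) (((k:ℝ)+1/2)/2^j))
            + eVariationOn f (Set.Icc (((k:ℝ)+1/2)/2^j) (((k:ℝ)+1)/2^j)))).toReal := by
        apply Finset.sum_le_sum
        intro k hk
        have h := haarCoeff_abs_le f hInt hBV j k (Finset.mem_range.1 hk)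
        have hGk : ((eVariationOn f (Set.Icc ((k:ℝ)/2^j) (((k:ℝ)+1/2)/2^j))
            + eVariationOn f (Set.Icc (((k:ℝ)+1/2)/2^j) (((k:ℝ)+1)/2^j)))).toReal
            = (eVariationOn f (Set.Icc ((k:ℝ)/2^j) (((k:ℝ)+1/2)/2^j))).toReal
              + (eVariationOn f (Set.Icc (((k:ℝ)+1/2)/2^j) (((k:ℝ)+1)/2^j))).toReal :=
          ENNReal.toReal_add (ENNReal.add_ne_top.1 (hfin k hk)).1
            (ENNReal.add_ne_top.1 (hfin k hk)).2
        rw [hGk]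
        exact h
    _ = (2:ℝ)^(-(j:ℝ)/2 - 1) * ∑ k ∈ Finset.range (2^j),
          ((eVariationOn f (Set.Icc ((k:ℝ)/2^j) (((k:ℝ)+1/2)/2^j))
            + eVariationOn f (Set.Icc (((k:ℝ)+1/2)/2^j) (((k:ℝ)+1)/2^j)))).toReal := by
        rw [← Finset.mul_sum]
    _ ≤ (2:ℝ)^(-(j:ℝ)/2 - 1) * TV := by
        apply mul_le_mul_of_nonneg_left _ (le_of_lt (Real.rpow_pos_of_pos two_pos _))
        rw [← ENNReal.toReal_sum hfin]
        calc (∑ k ∈ Finset.range (2^j),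
              (eVariationOn f (Set.Icc ((k:ℝ)/2^j) (((k:ℝ)+1/2)/2^j))
                + eVariationOn f (Set.Icc (((k:ℝ)+1/2)/2^j) (((k:ℝ)+1)/2^j)))).toReal
            ≤ (ENNReal.ofReal TV).toReal :=
              ENNReal.toReal_mono ENNReal.ofReal_ne_top hsum
          _ = TV := ENNReal.toReal_ofReal hTV0
end

section
/- (Proposition 1, reconstruction form.) Let f : [0,1] → ℝ have total variation TV(f) on [0,1], let J ≥ 0 be an integer and m = 2^J. Define the piecewise-constant reconstruction f̂ from the m samples {f(k/m)}_{k=0}^{m−1} by f̂(x) = f(k/m) for x ∈ [k/m, (k+1)/m), k = 0, …, m−1. Then ∫₀¹ (f(x) − f̂(x))² dx ≤ TV(f)² · m^{−1}. -/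
open MeasureTheory

/-- Proposition 1 (reconstruction form): if `f : [0,1] → ℝ` has total variation `TV` on
`[0,1]`, `J ≥ 0` and `m = 2^J`, then the piecewise-constant reconstruction
`f̂(x) = f(k/m)` for `x ∈ [k/m, (k+1)/m)` from the `m` samples `{f(k/m)}_{k=0}^{m-1}`
satisfies `∫₀¹ (f(x) - f̂(x))² dx ≤ TV² · m⁻¹`. -/
theorem piecewise_constant_reconstruction_error
    (f : ℝ → ℝ) (TV : ℝ) (hTV0 : 0 ≤ TV)
    (hTV : eVariationOn f (Set.Icc (0:ℝ) 1) = ENNReal.ofReal TV)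
    (J : ℕ) :
    ∫ x in (0:ℝ)..1, (f x - f ((⌊x * (2:ℝ)^J⌋₊ : ℝ) / (2:ℝ)^J)) ^ 2
      ≤ TV ^ 2 / (2:ℝ) ^ J := by
  set m : ℝ := (2:ℝ)^J with hm
  set n : ℕ := 2^J with hn
  have hmn : (n : ℝ) = m := by push_cast [hm, hn]; ring
  have hm0 : (0:ℝ) < m := by positivity
  set g : ℝ → ℝ := fun x => (f x - f ((⌊x * m⌋₊ : ℝ) / m)) ^ 2 with hg
  set a : ℕ → ℝ := fun k => (k : ℝ) / m with ha
  have ha_mono : ∀ k l : ℕ, k ≤ l → a k ≤ a l := fun k l h => by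
    have hkl : (k:ℝ) ≤ l := by exact_mod_cast h
    simp only [ha]
    gcongr
  have ha0 : a 0 = 0 := by simp [ha]
  have han : a n = 1 := by simp [ha, hmn, div_self hm0.ne']
  set E : ℕ → ENNReal := fun k => eVariationOn f (Set.Icc (a k) (a (k+1))) with hE
  -- subintervals lie in [0,1]
  have hsub : ∀ k, k < n → Set.Icc (a k) (a (k+1)) ⊆ Set.Icc (0:ℝ) 1 := by
    intro k hk
    apply Set.Icc_subset_Icc
    · rw [← ha0]; exact ha_mono 0 k (Nat.zero_le _)
    · rw [← han]; exact ha_mono (k+1) n hk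
  have hEle : ∀ k, k < n → E k ≤ ENNReal.ofReal TV := by
    intro k hk
    rw [← hTV]
    exact eVariationOn.mono f (hsub k hk)
  have hEfin : ∀ k, k < n → E k ≠ ⊤ := fun k hk =>
    ne_top_of_le_ne_top ENNReal.ofReal_ne_top (hEle k hk)
  set v : ℕ → ℝ := fun k => (E k).toReal with hv
  have hv0 : ∀ k, 0 ≤ v k := fun k => ENNReal.toReal_nonneg
  have hvle : ∀ k, k < n → v k ≤ TV := fun k hk =>
    ENNReal.toReal_le_of_le_ofReal hTV0 (hEle k hk)
  -- sum of variations
  have hsum : ∀ j : ℕ, j ≤ n →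
      ∑ k ∈ Finset.range j, E k = eVariationOn f (Set.Icc (0:ℝ) (a j)) := by
    intro j hj
    induction j with
    | zero =>
      simp only [Finset.range_zero, Finset.sum_empty, ha0]
      exact (eVariationOn.subsingleton f (by simp [Set.Icc_self])).symm
    | succ j ih =>
      rw [Finset.sum_range_succ, ih (Nat.le_of_succ_le hj)]
      have h0j : (0:ℝ) ≤ a j := by rw [← ha0]; exact ha_mono 0 j (Nat.zero_le _)
      have hjj : a j ≤ a (j+1) := ha_mono j (j+1) (Nat.le_succ _)
      have := eVariationOn.Icc_add_Icc f (s := Set.univ) h0j hjj (Set.mem_univ _)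
      simpa [Set.univ_inter] using this
  have hsumv : ∑ k ∈ Finset.range n, v k ≤ TV := by
    have h1 : ∑ k ∈ Finset.range n, E k = ENNReal.ofReal TV := by
      rw [hsum n le_rfl, han, hTV]
    have h2 : ∑ k ∈ Finset.range n, v k = (∑ k ∈ Finset.range n, E k).toReal := by
      rw [ENNReal.toReal_sum]
      intro k hk
      exact hEfin k (Finset.mem_range.mp hk)
    rw [h2, h1, ENNReal.toReal_ofReal hTV0]
  -- pointwise bound on Ico
  have hpoint : ∀ k, k < n → ∀ x ∈ Set.Ico (a k) (a (k+1)), g x ≤ v k * TV := by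
    intro k hk x hx
    have hxm0 : (0:ℝ) ≤ x * m := by
      have : (0:ℝ) ≤ x := le_trans (by rw [← ha0]; exact ha_mono 0 k (Nat.zero_le _)) hx.1
      positivity
    have hfloor : ⌊x * m⌋₊ = k := by
      rw [Nat.floor_eq_iff hxm0]
      constructor
      · have := hx.1
        rw [ha, div_le_iff₀ hm0] at this
        linarith
      · have := hx.2
        rw [ha] at this
        have h2 := (lt_div_iff₀ hm0).mp this
        push_cast at h2
        linarith
    have hxmem : x ∈ Set.Icc (a k) (a (k+1)) := ⟨hx.1, le_of_lt hx.2⟩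
    have hkmem : a k ∈ Set.Icc (a k) (a (k+1)) := ⟨le_rfl, ha_mono k (k+1) (Nat.le_succ _)⟩
    have hbv : BoundedVariationOn f (Set.Icc (a k) (a (k+1))) := hEfin k hk
    have hdist : dist (f x) (f (a k)) ≤ v k := hbv.dist_le hxmem hkmem
    have habs : |f x - f (a k)| ≤ v k := by rwa [Real.dist_eq] at hdist
    have : g x = |f x - f (a k)| ^ 2 := by
      simp only [hg, hfloor, sq_abs, ha]
    rw [this, sq]
    exact mul_le_mul habs (le_trans habs (hvle k hk)) (abs_nonneg _) (hv0 k)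
  by_cases hInt : IntervalIntegrable g volume 0 1
  · have hIntk : ∀ k, k < n → IntervalIntegrable g volume (a k) (a (k+1)) := by
      intro k hk
      apply hInt.mono_set
      rw [Set.uIcc_of_le (ha_mono k (k+1) (Nat.le_succ _)), Set.uIcc_of_le zero_le_one]
      exact hsub k hk
    have hsplit : ∫ x in (0:ℝ)..1, g x = ∑ k ∈ Finset.range n, ∫ x in (a k)..(a (k+1)), g x := by
      have h := intervalIntegral.sum_integral_adjacent_intervals
        (μ := volume) (f := g) (a := a) (fun k hk => hIntk k hk)
      rw [ha0, han] at h
      exact h.symm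
    have hbound : ∀ k, k < n →
        ∫ x in (a k)..(a (k+1)), g x ≤ (v k * TV) / m := by
      intro k hk
      have hab : a k ≤ a (k+1) := ha_mono k (k+1) (Nat.le_succ _)
      have hae : g ≤ᵐ[volume.restrict (Set.Icc (a k) (a (k+1)))] fun _ => v k * TV := by
        have h1 : ∀ᵐ (x : ℝ) ∂volume, x ≠ a (k+1) := by
          simp only [ae_iff, not_not]
          have : {x : ℝ | x = a (k+1)} = {a (k+1)} := by ext; simp
          rw [this]; exact Real.volume_singleton
        filter_upwards [ae_restrict_mem measurableSet_Icc, ae_restrict_of_ae h1] with x hx hne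
        exact hpoint k hk x ⟨hx.1, lt_of_le_of_ne hx.2 hne⟩
      calc ∫ x in (a k)..(a (k+1)), g x
          ≤ ∫ _ in (a k)..(a (k+1)), (v k * TV) :=
            intervalIntegral.integral_mono_ae_restrict hab (hIntk k hk)
              (intervalIntegrable_const) hae
        _ = (a (k+1) - a k) * (v k * TV) := by
            rw [intervalIntegral.integral_const, smul_eq_mul]
        _ = (v k * TV) / m := by
            have : a (k+1) - a k = 1 / m := by
              rw [ha]; push_cast; field_simp; ring
            rw [this]; ring
    calc ∫ x in (0:ℝ)..1, g x
        = ∑ k ∈ Finset.range n, ∫ x in (a k)..(a (k+1)), g x := hsplit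
      _ ≤ ∑ k ∈ Finset.range n, (v k * TV) / m := by
          apply Finset.sum_le_sum
          intro k hk
          exact hbound k (Finset.mem_range.mp hk)
      _ = (∑ k ∈ Finset.range n, v k) * TV / m := by
          rw [← Finset.sum_div, ← Finset.sum_mul]
      _ ≤ TV * TV / m := by
          gcongr
      _ = TV ^ 2 / m := by ring
  · rw [intervalIntegral.integral_undef hInt]
    positivity
end

section
/- (Proposition 1, coefficient-tail form.) Let f : [0,1] → ℝ have total variation TV(f) on [0,1] and let J ≥ 0 be an integer. Then the total squared energy of the Haar coefficients of f at scales j ≥ J satisfies Σ_{j ≥ J} Σ_{k=0}^{2^j − 1} θ_{j,k}(f)² ≤ TV(f)² · 2^{−J}. -/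
open MeasureTheory

lemma haarMother_scaled {c k a m b : ℝ} (hc : 0 < c) (ha : a = k/c)
    (hm : m = (k+1/2)/c) (hb : b = (k+1)/c) (x : ℝ) :
    haarMother (c*x - k) = (Set.Ico a m).indicator 1 x - (Set.Ico m b).indicator 1 x := by
  have h1 : (0 ≤ c*x - k) ↔ a ≤ x := by
    rw [ha, div_le_iff₀ hc]; constructor <;> intro h <;> nlinarith
  have h2 : (c*x - k < 1/2) ↔ x < m := by
    rw [hm, lt_div_iff₀ hc]; constructor <;> intro h <;> nlinarith
  have h3 : (1/2 ≤ c*x - k) ↔ m ≤ x := by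
    rw [hm, div_le_iff₀ hc]; constructor <;> intro h <;> nlinarith
  have h4 : (c*x - k < 1) ↔ x < b := by
    rw [hb, lt_div_iff₀ hc]; constructor <;> intro h <;> nlinarith
  simp only [haarMother, h1, h2, h3, h4, Set.indicator, Set.mem_Ico]
  by_cases hA : a ≤ x ∧ x < m <;> by_cases hB : m ≤ x ∧ x < b <;>
    simp [hA, hB] <;> exact absurd hA.2 (not_lt.mpr hB.1)

lemma mul_haarChild {j k : ℕ} {a m b : ℝ} (ha : a = (k:ℝ)/2^j)
    (hm : m = ((k:ℝ)+1/2)/2^j) (hb : b = ((k:ℝ)+1)/2^j) (f : ℝ → ℝ) (x : ℝ) :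
    f x * haarChild j k x
      = (2:ℝ)^((j:ℝ)/2) * ((Set.Ico a m).indicator f x - (Set.Ico m b).indicator f x) := by
  have hc : (0:ℝ) < 2^j := by positivity
  rw [haarChild, haarMother_scaled hc ha hm hb x]
  simp only [Set.indicator, Set.mem_Ico, Pi.one_apply]
  by_cases hA : a ≤ x ∧ x < m <;> by_cases hB : m ≤ x ∧ x < b <;> simp [hA, hB] <;> ring

lemma aeSetEq {a b : ℝ} {s t : Set ℝ} (hs1 : Set.Ioo a b ⊆ s) (hs2 : s ⊆ Set.Icc a b)
    (ht1 : Set.Ioo a b ⊆ t) (ht2 : t ⊆ Set.Icc a b) : s =ᵐ[volume] t := by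
  have hpair : volume ({a} ∪ {b} : Set ℝ) = 0 :=
    measure_union_null Real.volume_singleton Real.volume_singleton
  have hnull : volume (Set.Icc a b \ Set.Ioo a b) = 0 := by
    refine measure_mono_null ?_ hpair
    rintro x ⟨⟨h1, h2⟩, h3⟩
    simp only [Set.mem_Ioo, not_and, not_lt] at h3
    simp only [Set.mem_union, Set.mem_singleton_iff]
    rcases eq_or_lt_of_le h1 with h | h
    · exact Or.inl h.symm
    · exact Or.inr (le_antisymm h2 (h3 h))
  rw [MeasureTheory.ae_eq_set]
  constructor
  · refine measure_mono_null ?_ hnull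
    rintro x ⟨hxs, hxt⟩
    exact ⟨hs2 hxs, fun ho => hxt (ht1 ho)⟩
  · refine measure_mono_null ?_ hnull
    rintro x ⟨hxt, hxs⟩
    exact ⟨ht2 hxt, fun ho => hxs (hs1 ho)⟩

lemma haarCoeff_sq_le (f : ℝ → ℝ) (hint : IntegrableOn f (Set.Icc (0:ℝ) 1)) {j k : ℕ}
    (hk : k < 2^j)
    (hfin : eVariationOn f (Set.Icc ((k:ℝ)/2^j) (((k:ℝ)+1)/2^j)) ≠ ⊤) :
    haarCoeff j k f ^ 2
      ≤ ((2:ℝ)^j)⁻¹/4 * ((eVariationOn f (Set.Icc ((k:ℝ)/2^j) (((k:ℝ)+1)/2^j))).toReal)^2 := by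
  set a : ℝ := (k:ℝ)/2^j with ha
  set m : ℝ := ((k:ℝ)+1/2)/2^j with hm
  set b : ℝ := ((k:ℝ)+1)/2^j with hb
  set V : ℝ := (eVariationOn f (Set.Icc a b)).toReal with hV
  have hc : (0:ℝ) < 2^j := by positivity
  have hk' : (k:ℝ)+1 ≤ 2^j := by
    have h : (k:ℕ)+1 ≤ 2^j := hk
    calc (k:ℝ)+1 = ((k+1 : ℕ) : ℝ) := by push_cast; ring
    _ ≤ ((2^j : ℕ) : ℝ) := by exact_mod_cast h
    _ = 2^j := by push_cast; ring
  have h0a : 0 ≤ a := by positivity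
  have ham : a < m := by rw [ha, hm, div_lt_div_iff_of_pos_right hc]; linarith
  have hmb : m < b := by rw [hm, hb, div_lt_div_iff_of_pos_right hc]; linarith
  have hb1 : b ≤ 1 := by rw [hb, div_le_one hc]; exact hk'
  have hab : Set.Icc a b ⊆ Set.Icc (0:ℝ) 1 := Set.Icc_subset_Icc h0a hb1
  have hIf : IntegrableOn f (Set.Icc a b) := hint.mono_set hab
  have hI1 : IntegrableOn f (Set.Ico a m) :=
    hIf.mono_set (Set.Ico_subset_Icc_self.trans (Set.Icc_subset_Icc_right hmb.le))
  have hI2 : IntegrableOn f (Set.Ico m b) :=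
    hIf.mono_set (Set.Ico_subset_Icc_self.trans (Set.Icc_subset_Icc_left ham.le))
  have hind1 : Integrable ((Set.Ico a m).indicator f) volume :=
    hI1.integrable_indicator measurableSet_Ico
  have hind2 : Integrable ((Set.Ico m b).indicator f) volume :=
    hI2.integrable_indicator measurableSet_Ico
  -- step A
  have hA : haarCoeff j k f = (2:ℝ)^((j:ℝ)/2) *
      ((∫ x in (0:ℝ)..1, (Set.Ico a m).indicator f x)
        - ∫ x in (0:ℝ)..1, (Set.Ico m b).indicator f x) := by
    rw [haarCoeff,
      intervalIntegral.integral_congr (g := fun x => (2:ℝ)^((j:ℝ)/2) *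
        ((Set.Ico a m).indicator f x - (Set.Ico m b).indicator f x))
        (fun x _ => mul_haarChild ha hm hb f x),
      intervalIntegral.integral_const_mul,
      intervalIntegral.integral_sub hind1.intervalIntegrable hind2.intervalIntegrable]
  -- step B
  have hB1 : (∫ x in (0:ℝ)..1, (Set.Ico a m).indicator f x) = ∫ x in a..m, f x := by
    rw [intervalIntegral.integral_of_le zero_le_one, intervalIntegral.integral_of_le ham.le,
      setIntegral_indicator measurableSet_Ico]
    refine setIntegral_congr_set (aeSetEq (a := a) (b := m) ?_ ?_ ?_ ?_)
    · intro x hx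
      exact ⟨⟨lt_of_le_of_lt h0a hx.1, le_trans hx.2.le (le_trans hmb.le hb1)⟩, hx.1.le, hx.2⟩
    · exact fun x hx => ⟨hx.2.1, hx.2.2.le⟩
    · exact fun x hx => ⟨hx.1, hx.2.le⟩
    · exact Set.Ioc_subset_Icc_self
  have hB2 : (∫ x in (0:ℝ)..1, (Set.Ico m b).indicator f x) = ∫ x in m..b, f x := by
    rw [intervalIntegral.integral_of_le zero_le_one, intervalIntegral.integral_of_le hmb.le,
      setIntegral_indicator measurableSet_Ico]
    refine setIntegral_congr_set (aeSetEq (a := m) (b := b) ?_ ?_ ?_ ?_)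
    · intro x hx
      exact ⟨⟨lt_of_le_of_lt (le_trans h0a ham.le) hx.1, le_trans hx.2.le hb1⟩, hx.1.le, hx.2⟩
    · exact fun x hx => ⟨hx.2.1, hx.2.2.le⟩
    · exact fun x hx => ⟨hx.1, hx.2.le⟩
    · exact Set.Ioc_subset_Icc_self
  -- step C : translation
  have hmb' : m + (m - a) = b := by rw [ha, hm, hb]; ring
  have hC : (∫ x in m..b, f x) = ∫ x in a..m, f (x + (m - a)) := by
    refine Eq.symm ?_
    rw [intervalIntegral.integral_comp_add_right f (m - a)]
    have e1 : a + (m - a) = m := by ring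
    rw [e1, hmb']
  -- integrability for integral_sub
  have hfi1 : IntervalIntegrable f volume a m := by
    rw [intervalIntegrable_iff_integrableOn_Icc_of_le ham.le]
    exact hIf.mono_set (Set.Icc_subset_Icc_right hmb.le)
  have hfi2 : IntervalIntegrable (fun x => f (x + (m - a))) volume a m := by
    have h2 : IntervalIntegrable f volume m b := by
      rw [intervalIntegrable_iff_integrableOn_Icc_of_le hmb.le]
      exact hIf.mono_set (Set.Icc_subset_Icc_left ham.le)
    have := h2.comp_add_right (m - a)
    have e1 : m - (m - a) = a := by ring
    have e2 : b - (m - a) = m := by rw [← hmb']; ring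
    rwa [e1, e2] at this
  have hD : haarCoeff j k f
      = (2:ℝ)^((j:ℝ)/2) * ∫ x in a..m, (f x - f (x + (m - a))) := by
    rw [hA, hB1, hB2, hC, intervalIntegral.integral_sub hfi1 hfi2]
  -- step E: bound
  have hbound : ∀ x ∈ Set.uIoc a m, ‖f x - f (x + (m - a))‖ ≤ V := by
    intro x hx
    rw [Set.uIoc_of_le ham.le] at hx
    have hx1 : x ∈ Set.Icc a b := ⟨hx.1.le, le_trans hx.2 hmb.le⟩
    have hx2 : x + (m - a) ∈ Set.Icc a b := by
      constructor
      · linarith [hx.1.le, ham.le]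
      · have := hx.2; linarith [hmb']
    have hd := eVariationOn.edist_le f hx1 hx2
    have : dist (f x) (f (x + (m - a))) ≤ V := by
      rw [dist_edist]; exact ENNReal.toReal_mono hfin hd
    rwa [Real.dist_eq, ← Real.norm_eq_abs] at this
  have hE : ‖∫ x in a..m, (f x - f (x + (m - a)))‖ ≤ V * |m - a| :=
    intervalIntegral.norm_integral_le_of_norm_le_const hbound
  have hVnn : 0 ≤ V := ENNReal.toReal_nonneg
  have hma : |m - a| = (1/2)/2^j := by
    rw [abs_of_nonneg (by linarith), ha, hm]; ring
  have habs : |haarCoeff j k f| ≤ (2:ℝ)^((j:ℝ)/2) * (V * ((1/2)/2^j)) := by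
    rw [hD, abs_mul, abs_of_nonneg (by positivity : (0:ℝ) ≤ (2:ℝ)^((j:ℝ)/2))]
    rw [hma] at hE
    exact mul_le_mul_of_nonneg_left (by rwa [Real.norm_eq_abs] at hE) (by positivity)
  have hsq : ((2:ℝ)^((j:ℝ)/2))^2 = 2^(j:ℕ) := by
    rw [sq, ← Real.rpow_add two_pos]
    norm_num
  calc haarCoeff j k f ^ 2 = |haarCoeff j k f| ^ 2 := (sq_abs _).symm
  _ ≤ ((2:ℝ)^((j:ℝ)/2) * (V * ((1/2)/2^j)))^2 := by
      apply pow_le_pow_left₀ (abs_nonneg _) habs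
  _ = ((2:ℝ)^((j:ℝ)/2))^2 * (V * ((1/2)/2^j))^2 := by ring
  _ = ((2:ℝ)^j)⁻¹/4 * V^2 := by rw [hsq]; field_simp; ring

lemma var_sum (f : ℝ → ℝ) (j : ℕ) (n : ℕ) :
    ∑ k ∈ Finset.range n, eVariationOn f (Set.Icc ((k:ℝ)/2^j) (((k:ℝ)+1)/2^j))
      = eVariationOn f (Set.Icc (0:ℝ) ((n:ℝ)/2^j)) := by
  have hc : (0:ℝ) < 2^j := by positivity
  induction n with
  | zero =>
    simp only [Finset.range_zero, Finset.sum_empty, Nat.cast_zero, zero_div]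
    rw [Set.Icc_self]
    exact (eVariationOn.subsingleton f Set.subsingleton_singleton).symm
  | succ n ih =>
    rw [Finset.sum_range_succ, ih]
    have h1 : (0:ℝ) ≤ (n:ℝ)/2^j := by positivity
    have h2 : (n:ℝ)/2^j ≤ ((n:ℝ)+1)/2^j := by gcongr; linarith
    have key := eVariationOn.Icc_add_Icc (s := Set.univ) f h1 h2 (Set.mem_univ ((n:ℝ)/2^j))
    simp only [Set.univ_inter] at key
    push_cast
    exact key

/-- Proposition 1 (coefficient-tail form): if `f : [0,1] → ℝ` has total variation `TV`
on `[0,1]` and `J ≥ 0`, then the total squared energy of the Haar coefficients of `f` at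
scales `j ≥ J` satisfies `Σ_{j ≥ J} Σ_{k=0}^{2^j-1} θ_{j,k}(f)² ≤ TV² · 2^{-J}`
(the scales `j ≥ J` are enumerated as `j = J + i`, `i : ℕ`). -/
theorem haar_coeff_tail_energy_le
    (f : ℝ → ℝ) (TV : ℝ) (hTV0 : 0 ≤ TV)
    (hTV : eVariationOn f (Set.Icc (0:ℝ) 1) = ENNReal.ofReal TV)
    (J : ℕ) :
    ∑' i : ℕ, ∑ k ∈ Finset.range (2 ^ (J + i)), (haarCoeff (J + i) k f) ^ 2
      ≤ TV ^ 2 * (2:ℝ) ^ (-(J:ℝ)) := by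
  -- integrability of f on [0,1]
  have hbv : BoundedVariationOn f (Set.Icc (0:ℝ) 1) := by
    rw [BoundedVariationOn, hTV]; exact ENNReal.ofReal_ne_top
  obtain ⟨p, q, hp, hq, hpq⟩ :=
    hbv.locallyBoundedVariationOn.exists_monotoneOn_sub_monotoneOn
  have hmeas : AEMeasurable f (volume.restrict (Set.Icc (0:ℝ) 1)) := by
    rw [hpq]
    exact (aemeasurable_restrict_of_monotoneOn measurableSet_Icc hp).sub
      (aemeasurable_restrict_of_monotoneOn measurableSet_Icc hq)
  have hbd : ∀ x ∈ Set.Icc (0:ℝ) 1, ‖f x‖ ≤ ‖f 0‖ + TV := by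
    intro x hx
    have h0 : (0:ℝ) ∈ Set.Icc (0:ℝ) 1 := by constructor <;> norm_num
    have hd := eVariationOn.edist_le f hx h0
    have : dist (f x) (f 0) ≤ TV := by
      rw [dist_edist]
      calc (edist (f x) (f 0)).toReal ≤ (eVariationOn f (Set.Icc (0:ℝ) 1)).toReal :=
        ENNReal.toReal_mono (by rw [hTV]; exact ENNReal.ofReal_ne_top) hd
      _ = TV := by rw [hTV, ENNReal.toReal_ofReal hTV0]
    rw [Real.dist_eq] at this
    rw [Real.norm_eq_abs, Real.norm_eq_abs]
    calc |f x| = |f 0 + (f x - f 0)| := by ring_nf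
    _ ≤ |f 0| + |f x - f 0| := abs_add_le _ _
    _ ≤ |f 0| + TV := by linarith
  have hint : IntegrableOn f (Set.Icc (0:ℝ) 1) :=
    ⟨hmeas.aestronglyMeasurable,
      HasFiniteIntegral.restrict_of_bounded (C := ‖f 0‖ + TV) measure_Icc_lt_top
        ((ae_restrict_iff' measurableSet_Icc).mpr (Filter.Eventually.of_forall hbd))⟩
  -- per-scale bound
  have hscale : ∀ j : ℕ, ∑ k ∈ Finset.range (2^j), haarCoeff j k f ^ 2
      ≤ ((2:ℝ)^j)⁻¹/4 * TV^2 := by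
    intro j
    have hsub : ∀ k ∈ Finset.range (2^j),
        Set.Icc ((k:ℝ)/2^j) (((k:ℝ)+1)/2^j) ⊆ Set.Icc (0:ℝ) 1 := by
      intro k hk
      have hk' : (k:ℝ)+1 ≤ 2^j := by
        have h : (k:ℕ)+1 ≤ 2^j := Finset.mem_range.mp hk
        calc (k:ℝ)+1 = ((k+1 : ℕ) : ℝ) := by push_cast; ring
        _ ≤ ((2^j : ℕ) : ℝ) := by exact_mod_cast h
        _ = 2^j := by push_cast; ring
      apply Set.Icc_subset_Icc (by positivity)
      rw [div_le_one (by positivity : (0:ℝ) < 2^j)]; exact hk'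
    have hfin : ∀ k ∈ Finset.range (2^j),
        eVariationOn f (Set.Icc ((k:ℝ)/2^j) (((k:ℝ)+1)/2^j)) ≠ ⊤ := by
      intro k hk
      exact ne_top_of_le_ne_top (by rw [hTV]; exact ENNReal.ofReal_ne_top)
        (eVariationOn.mono f (hsub k hk))
    have hsumV : ∑ k ∈ Finset.range (2^j),
        (eVariationOn f (Set.Icc ((k:ℝ)/2^j) (((k:ℝ)+1)/2^j))).toReal = TV := by
      rw [← ENNReal.toReal_sum hfin, var_sum f j (2^j)]
      have : ((2^j : ℕ) : ℝ)/2^j = 1 := by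
        rw [Nat.cast_pow]; push_cast
        exact div_self (by positivity)
      rw [this, hTV, ENNReal.toReal_ofReal hTV0]
    calc ∑ k ∈ Finset.range (2^j), haarCoeff j k f ^ 2
        ≤ ∑ k ∈ Finset.range (2^j), ((2:ℝ)^j)⁻¹/4 *
            ((eVariationOn f (Set.Icc ((k:ℝ)/2^j) (((k:ℝ)+1)/2^j))).toReal)^2 :=
          Finset.sum_le_sum fun k hk =>
            haarCoeff_sq_le f hint (Finset.mem_range.mp hk) (hfin k hk)
    _ = ((2:ℝ)^j)⁻¹/4 * ∑ k ∈ Finset.range (2^j),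
            ((eVariationOn f (Set.Icc ((k:ℝ)/2^j) (((k:ℝ)+1)/2^j))).toReal)^2 :=
          (Finset.mul_sum _ _ _).symm
    _ ≤ ((2:ℝ)^j)⁻¹/4 * (∑ k ∈ Finset.range (2^j),
            (eVariationOn f (Set.Icc ((k:ℝ)/2^j) (((k:ℝ)+1)/2^j))).toReal)^2 := by
          apply mul_le_mul_of_nonneg_left
            (Finset.sum_sq_le_sq_sum_of_nonneg fun k _ => ENNReal.toReal_nonneg)
          positivity
    _ = ((2:ℝ)^j)⁻¹/4 * TV^2 := by rw [hsumV]
  -- assemble the tail sum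
  set g : ℕ → ℝ := fun i => (((2:ℝ)^J)⁻¹/4 * TV^2) * (1/2)^i with hg
  have hgi : ∀ i, ((2:ℝ)^(J+i))⁻¹/4 * TV^2 = g i := by
    intro i
    rw [hg, pow_add, mul_inv]
    have : ((2:ℝ)^i)⁻¹ = (1/2)^i := by rw [one_div, inv_pow]
    rw [this]; ring
  have hgsum : Summable g := (summable_geometric_of_lt_one (by norm_num) (by norm_num)).mul_left _
  have hterm : ∀ i, ∑ k ∈ Finset.range (2^(J+i)), haarCoeff (J+i) k f ^ 2 ≤ g i := by
    intro i; rw [← hgi i]; exact hscale (J+i)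
  have hnn : ∀ i, 0 ≤ ∑ k ∈ Finset.range (2^(J+i)), haarCoeff (J+i) k f ^ 2 :=
    fun i => Finset.sum_nonneg fun k _ => sq_nonneg _
  have hLsum : Summable (fun i => ∑ k ∈ Finset.range (2^(J+i)), haarCoeff (J+i) k f ^ 2) :=
    Summable.of_nonneg_of_le hnn hterm hgsum
  calc ∑' i : ℕ, ∑ k ∈ Finset.range (2^(J+i)), haarCoeff (J+i) k f ^ 2
      ≤ ∑' i, g i := Summable.tsum_le_tsum hterm hLsum hgsum
  _ = (((2:ℝ)^J)⁻¹/4 * TV^2) * 2 := by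
      rw [hg, tsum_mul_left, tsum_geometric_of_lt_one (by norm_num) (by norm_num)]
      norm_num
  _ ≤ TV^2 * (2:ℝ)^(-(J:ℝ)) := by
      have h2J : (2:ℝ)^(-(J:ℝ)) = ((2:ℝ)^J)⁻¹ := by
        rw [Real.rpow_neg (by norm_num), Real.rpow_natCast]
      rw [h2J]
      have : (0:ℝ) ≤ ((2:ℝ)^J)⁻¹ * TV^2 := by positivity
      nlinarith
end

section
/- (Theorem 1, first claim, abstract form.) Let K > 0, c_max > 0, m ≥ 2, and let P be a nonempty set of measurable probability densities p on [0,1] (i.e. p ≥ 0 and ∫₀¹ p = 1) satisfying p(x) ≤ c_max for all x. Let β ∈ BV_K[0,1] and let Γ(β,m) = {β' ∈ BV_K[0,1] : β'(i/(m−1)) = β(i/(m−1)) for all i ∈ {0,…,m−1}}. Then 0 ≤ sup_{p ∈ P} ∫₀¹ p(x)β(x) dx − sup_{p ∈ P} inf_{β' ∈ Γ(β,m)} ∫₀¹ p(x)β'(x) dx ≤ 2√(c_max) · K · (m−1)^{−1/2}. -/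
open MeasureTheory

/-- The set `BV_K[0,1]` of functions on `[0,1]` of total variation at most `K`. -/
def BVBall (K : ℝ) : Set (ℝ → ℝ) :=
  {f | eVariationOn f (Set.Icc (0:ℝ) 1) ≤ ENNReal.ofReal K}

/-- `Γ(β, m)`: functions in `BV_K[0,1]` agreeing with `β` at the `m` grid points
`i/(m-1)`, `i = 0, …, m-1`. -/
def indistSet (K : ℝ) (β : ℝ → ℝ) (m : ℕ) : Set (ℝ → ℝ) :=
  {β' | β' ∈ BVBall K ∧ ∀ i : ℕ, i < m → β' ((i:ℝ) / ((m:ℝ) - 1)) = β ((i:ℝ) / ((m:ℝ) - 1))}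

/-- The energy delivered under input density `p` and harvesting function `β`. -/
noncomputable def energyOf (p β : ℝ → ℝ) : ℝ := ∫ x in (0:ℝ)..1, p x * β x


open Set




lemma edist_sub_sub_le' (a b c d : ℝ) : edist (a - b) (c - d) ≤ edist a c + edist b d := by
  simp only [edist_dist, Real.dist_eq]
  calc ENNReal.ofReal |a - b - (c - d)| ≤ ENNReal.ofReal (|a - c| + |b - d|) := by
        refine ENNReal.ofReal_le_ofReal ?_
        rw [show a - b - (c - d) = (a - c) - (b - d) by ring]
        exact abs_sub _ _
    _ ≤ ENNReal.ofReal |a - c| + ENNReal.ofReal |b - d| := ENNReal.ofReal_add_le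

lemma evar_sub_le (f g : ℝ → ℝ) (s : Set ℝ) :
    eVariationOn (fun x => f x - g x) s ≤ eVariationOn f s + eVariationOn g s := by
  refine iSup_le fun p => ?_
  calc ∑ i ∈ Finset.range p.1, edist ((fun x => f x - g x) (p.2.1 (i+1))) ((fun x => f x - g x) (p.2.1 i))
      ≤ ∑ i ∈ Finset.range p.1, (edist (f (p.2.1 (i+1))) (f (p.2.1 i)) + edist (g (p.2.1 (i+1))) (g (p.2.1 i))) := by
        refine Finset.sum_le_sum fun i _ => ?_
        exact edist_sub_sub_le' _ _ _ _
    _ = (∑ i ∈ Finset.range p.1, edist (f (p.2.1 (i+1))) (f (p.2.1 i)))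
        + ∑ i ∈ Finset.range p.1, edist (g (p.2.1 (i+1))) (g (p.2.1 i)) := Finset.sum_add_distrib
    _ ≤ eVariationOn f s + eVariationOn g s := by
        gcongr
        · exact eVariationOn.sum_le (f := f) (n := p.1) p.2.2.1 p.2.2.2
        · exact eVariationOn.sum_le (f := g) (n := p.1) p.2.2.1 p.2.2.2

lemma evar_Icc_add_Icc (f : ℝ → ℝ) {a b c : ℝ} (hab : a ≤ b) (hbc : b ≤ c) :
    eVariationOn f (Icc a b) + eVariationOn f (Icc b c) = eVariationOn f (Icc a c) := by
  have h := eVariationOn.Icc_add_Icc f (s := Icc a c) hab hbc ⟨hab, hbc⟩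
  rwa [Set.inter_eq_self_of_subset_right (Icc_subset_Icc le_rfl hbc),
    Set.inter_eq_self_of_subset_right (Icc_subset_Icc hab le_rfl),
    Set.inter_eq_self_of_subset_right (subset_refl _)] at h


lemma evar_grid_sum (f : ℝ → ℝ) (a : ℕ → ℝ) (ha : ∀ i, a i ≤ a (i+1)) (k : ℕ) :
    ∑ i ∈ Finset.range k, eVariationOn f (Icc (a i) (a (i+1)))
      = eVariationOn f (Icc (a 0) (a k)) := by
  have hmono : Monotone a := monotone_nat_of_le_succ ha
  induction k with
  | zero =>
    have : eVariationOn f (Icc (a 0) (a 0)) = 0 := by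
      apply eVariationOn.subsingleton
      rw [Set.Icc_self]; exact Set.subsingleton_singleton
    simp [this]
  | succ k ih =>
    rw [Finset.sum_range_succ, ih, evar_Icc_add_Icc f (hmono (Nat.zero_le k)) (ha k)]
lemma bv_aemeasurable {f : ℝ → ℝ} (hf : BoundedVariationOn f (Icc (0:ℝ) 1)) :
    AEMeasurable f (volume.restrict (Icc (0:ℝ) 1)) := by
  obtain ⟨u, v, hu, hv, huv⟩ :=
    hf.locallyBoundedVariationOn.exists_monotoneOn_sub_monotoneOn
  have hum : AEMeasurable u (volume.restrict (Icc (0:ℝ) 1)) :=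
    aemeasurable_restrict_of_monotoneOn measurableSet_Icc hu
  have hvm : AEMeasurable v (volume.restrict (Icc (0:ℝ) 1)) :=
    aemeasurable_restrict_of_monotoneOn measurableSet_Icc hv
  rw [huv]; exact hum.sub hvm

lemma bvball_bound {K : ℝ} (hK : 0 ≤ K) {f : ℝ → ℝ}
    (hf : eVariationOn f (Icc (0:ℝ) 1) ≤ ENNReal.ofReal K) {x : ℝ}
    (hx : x ∈ Icc (0:ℝ) 1) : |f x| ≤ |f 0| + K := by
  have h0 : (0:ℝ) ∈ Icc (0:ℝ) 1 := ⟨le_rfl, zero_le_one⟩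
  have h := (eVariationOn.edist_le f hx h0).trans hf
  rw [edist_dist, Real.dist_eq] at h
  have h2 : |f x - f 0| ≤ K := by
    have := (ENNReal.ofReal_le_ofReal_iff hK).mp h
    exact this
  calc |f x| = |f x - f 0 + f 0| := by ring_nf
    _ ≤ |f x - f 0| + |f 0| := abs_add_le _ _
    _ ≤ K + |f 0| := by linarith
    _ = |f 0| + K := by ring

lemma mul_intervalIntegrable {p f : ℝ → ℝ} (hp : Measurable p) {C M : ℝ}
    (hpb : ∀ x, |p x| ≤ C)
    (hfm : AEMeasurable f (volume.restrict (Icc (0:ℝ) 1)))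
    (hfb : ∀ x ∈ Icc (0:ℝ) 1, |f x| ≤ M)
    {a b : ℝ} (hab : a ≤ b) (ha : 0 ≤ a) (hb : b ≤ 1) :
    IntervalIntegrable (fun x => p x * f x) volume a b := by
  rw [intervalIntegrable_iff_integrableOn_Ioc_of_le hab]
  have hsub : Ioc a b ⊆ Icc (0:ℝ) 1 := fun x hx => ⟨ha.trans hx.1.le, hx.2.trans hb⟩
  have hfm' : AEMeasurable f (volume.restrict (Ioc a b)) :=
    hfm.mono_measure (Measure.restrict_mono hsub le_rfl)
  have hm : AEStronglyMeasurable (fun x => p x * f x) (volume.restrict (Ioc a b)) :=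
    ((hp.aemeasurable.mul hfm')).aestronglyMeasurable
  refine Integrable.mono' (g := fun _ => C * M) (integrableOn_const measure_Ioc_lt_top.ne) hm ?_
  · refine (ae_restrict_iff' measurableSet_Ioc).mpr (ae_of_all _ fun x hx => ?_)
    calc ‖p x * f x‖ = |p x| * |f x| := abs_mul _ _
      _ ≤ C * M := by
          have h1 := hpb x
          have h2 := hfb x (hsub hx)
          have : (0:ℝ) ≤ |p x| := abs_nonneg _
          nlinarith [abs_nonneg (f x)]

lemma core_bound (K cmax : ℝ) (hK : 0 < K) (hc : 0 < cmax) (n : ℕ) (hn : 1 ≤ n)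
    (p : ℝ → ℝ) (hpm : Measurable p) (hp0 : ∀ x, 0 ≤ p x)
    (hp1 : (∫ x in (0:ℝ)..1, p x) = 1) (hpc : ∀ x, p x ≤ cmax)
    (β β' : ℝ → ℝ) (hβ : eVariationOn β (Icc (0:ℝ) 1) ≤ ENNReal.ofReal K)
    (hβ' : eVariationOn β' (Icc (0:ℝ) 1) ≤ ENNReal.ofReal K)
    (hagree : ∀ i : ℕ, i ≤ n → β' ((i:ℝ)/(n:ℝ)) = β ((i:ℝ)/(n:ℝ))) :
    (∫ x in (0:ℝ)..1, p x * β x) - (∫ x in (0:ℝ)..1, p x * β' x)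
      ≤ 2 * K * min (cmax / n) 1 := by
  have hnR : (0:ℝ) < n := by exact_mod_cast hn
  set a : ℕ → ℝ := fun i => (i:ℝ) / n with ha_def
  have ha0 : a 0 = 0 := by simp [ha_def]
  have han : a n = 1 := by simp [ha_def, hnR.ne']
  have hstep : ∀ i, a i ≤ a (i+1) := by
    intro i
    simp only [ha_def]
    gcongr <;> push_cast <;> linarith
  have hamono : Monotone a := monotone_nat_of_le_succ hstep
  have hrange : ∀ i : ℕ, i ≤ n → a i ∈ Icc (0:ℝ) 1 := by
    intro i hi
    constructor
    · exact div_nonneg (Nat.cast_nonneg i) hnR.le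
    · rw [div_le_one hnR]; exact_mod_cast hi
  have hgap : ∀ i, a (i+1) - a i = 1 / n := by
    intro i; rw [ha_def]; push_cast; field_simp; ring
  -- boundedness
  have hβ0 : β' 0 = β 0 := by
    have := hagree 0 (Nat.zero_le n); simpa using this
  set M : ℝ := |β 0| + K with hM
  have hβb : ∀ x ∈ Icc (0:ℝ) 1, |β x| ≤ M := fun x hx => bvball_bound hK.le hβ hx
  have hβ'b : ∀ x ∈ Icc (0:ℝ) 1, |β' x| ≤ M := by
    intro x hx
    have := bvball_bound hK.le hβ' hx
    rwa [hβ0] at this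
  have hpb : ∀ x, |p x| ≤ cmax := fun x => abs_le.mpr ⟨by linarith [hp0 x], hpc x⟩
  -- measurability
  have hβmeas : AEMeasurable β (volume.restrict (Icc (0:ℝ) 1)) :=
    bv_aemeasurable (hβ.trans_lt ENNReal.ofReal_lt_top).ne
  have hβ'meas : AEMeasurable β' (volume.restrict (Icc (0:ℝ) 1)) :=
    bv_aemeasurable (hβ'.trans_lt ENNReal.ofReal_lt_top).ne
  set g : ℝ → ℝ := fun x => β x - β' x with hg_def
  have hgmeas : AEMeasurable g (volume.restrict (Icc (0:ℝ) 1)) := hβmeas.sub hβ'meas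
  have hgb : ∀ x ∈ Icc (0:ℝ) 1, |g x| ≤ M + M := by
    intro x hx
    calc |g x| ≤ |β x| + |β' x| := abs_sub _ _
      _ ≤ M + M := add_le_add (hβb x hx) (hβ'b x hx)
  -- variation of g
  have hgvar : eVariationOn g (Icc (0:ℝ) 1) ≤ ENNReal.ofReal (2*K) := by
    calc eVariationOn g (Icc (0:ℝ) 1)
        ≤ eVariationOn β (Icc (0:ℝ) 1) + eVariationOn β' (Icc (0:ℝ) 1) :=
          evar_sub_le β β' _
      _ ≤ ENNReal.ofReal K + ENNReal.ofReal K := add_le_add hβ hβ'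
      _ = ENNReal.ofReal (2*K) := by rw [← ENNReal.ofReal_add hK.le hK.le]; ring_nf
  -- integrability on subintervals
  have hint : ∀ i : ℕ, i < n → ∀ f : ℝ → ℝ,
      AEMeasurable f (volume.restrict (Icc (0:ℝ) 1)) → (∀ x ∈ Icc (0:ℝ) 1, |f x| ≤ M + M) →
      IntervalIntegrable (fun x => p x * f x) volume (a i) (a (i+1)) := by
    intro i hi f hfm hfb
    exact mul_intervalIntegrable hpm hpb hfm hfb (hstep i) (hrange i hi.le).1
      (hrange (i+1) hi).2
  -- the variation pieces
  set u : ℕ → ℝ := fun i => (eVariationOn g (Icc (a i) (a (i+1)))).toReal with hu_def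
  have hsubvar : ∀ i, i < n → eVariationOn g (Icc (a i) (a (i+1))) ≤ ENNReal.ofReal (2*K) := by
    intro i hi
    refine (eVariationOn.mono g ?_).trans hgvar
    exact Icc_subset_Icc (hrange i hi.le).1 (hrange (i+1) hi).2
  have hvar_fin : ∀ i, i < n → eVariationOn g (Icc (a i) (a (i+1))) ≠ ⊤ :=
    fun i hi => ((hsubvar i hi).trans_lt ENNReal.ofReal_lt_top).ne
  have hu_nonneg : ∀ i, 0 ≤ u i := fun i => ENNReal.toReal_nonneg
  -- pointwise bound on each subinterval
  have hg_pt : ∀ i, i < n → ∀ x ∈ Icc (a i) (a (i+1)), |g x| ≤ u i := by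
    intro i hi x hx
    have hzero : g (a i) = 0 := by
      simp only [hg_def]
      rw [← hagree i hi.le]; ring
    have h := eVariationOn.edist_le g hx (⟨le_rfl, hstep i⟩ : a i ∈ Icc (a i) (a (i+1)))
    rw [edist_dist, Real.dist_eq, hzero, sub_zero] at h
    exact (ENNReal.ofReal_le_iff_le_toReal (hvar_fin i hi)).mp h
  -- weights
  set w : ℕ → ℝ := fun i => ∫ x in (a i)..(a (i+1)), p x with hw_def
  have hw_nonneg : ∀ i, 0 ≤ w i := by
    intro i
    exact intervalIntegral.integral_nonneg (hstep i) (fun x _ => hp0 x)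
  have hpint : ∀ (s t : ℝ), IntervalIntegrable p volume s t := by
    intro s t
    rw [intervalIntegrable_iff]
    refine Integrable.mono' (g := fun _ => cmax)
      (integrableOn_const measure_Ioc_lt_top.ne)
      hpm.aestronglyMeasurable.restrict (ae_of_all _ fun x => ?_)
    simpa using hpb x
  have hw_le : ∀ i, i < n → w i ≤ min (cmax / n) 1 := by
    intro i hi
    refine le_min ?_ ?_
    · have h1 : w i ≤ ∫ x in (a i)..(a (i+1)), cmax := by
        apply intervalIntegral.integral_mono_on (hstep i) (hpint _ _) intervalIntegrable_const
        intro x _; exact hpc x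
      rw [intervalIntegral.integral_const, smul_eq_mul, hgap i] at h1
      calc w i ≤ (1/n) * cmax := h1
        _ = cmax / n := by ring
    · have hsum : ∑ j ∈ Finset.range n, w j = 1 := by
        have h2 := intervalIntegral.sum_integral_adjacent_intervals
          (μ := volume) (a := a) (f := p) (n := n) (fun k _ => hpint _ _)
        rw [ha0, han] at h2
        rw [hw_def]; rw [h2, hp1]
      calc w i ≤ ∑ j ∈ Finset.range n, w j :=
            Finset.single_le_sum (fun j _ => hw_nonneg j) (Finset.mem_range.mpr hi)
        _ = 1 := hsum
  have hmin_nonneg : 0 ≤ min (cmax / n) 1 :=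
    le_min (div_nonneg hc.le hnR.le) zero_le_one
  have hper : ∀ i, i < n → (∫ x in (a i)..(a (i+1)), p x * g x) ≤ u i * w i := by
    intro i hi
    have h1 : (∫ x in (a i)..(a (i+1)), p x * g x)
        ≤ ∫ x in (a i)..(a (i+1)), p x * u i := by
      apply intervalIntegral.integral_mono_on (hstep i) (hint i hi g hgmeas hgb)
        ((hpint _ _).mul_const _)
      intro x hx
      have h2 := abs_le.mp (hg_pt i hi x hx)
      have h3 := hp0 x
      nlinarith
    rw [intervalIntegral.integral_mul_const] at h1
    calc (∫ x in (a i)..(a (i+1)), p x * g x) ≤ w i * u i := h1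
      _ = u i * w i := mul_comm _ _
  have intβ : IntervalIntegrable (fun x => p x * β x) volume 0 1 :=
    mul_intervalIntegrable hpm hpb hβmeas hβb zero_le_one le_rfl le_rfl
  have intβ' : IntervalIntegrable (fun x => p x * β' x) volume 0 1 :=
    mul_intervalIntegrable hpm hpb hβ'meas hβ'b zero_le_one le_rfl le_rfl
  have hdiff : (∫ x in (0:ℝ)..1, p x * β x) - (∫ x in (0:ℝ)..1, p x * β' x)
      = ∫ x in (0:ℝ)..1, p x * g x := by
    rw [← intervalIntegral.integral_sub intβ intβ']
    apply intervalIntegral.integral_congr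
    intro x _
    simp only [hg_def]; ring
  have hsplit : (∫ x in (0:ℝ)..1, p x * g x)
      = ∑ i ∈ Finset.range n, ∫ x in (a i)..(a (i+1)), p x * g x := by
    have h := intervalIntegral.sum_integral_adjacent_intervals
      (μ := volume) (n := n) (fun k hk => hint k hk g hgmeas hgb)
    rw [ha0, han] at h
    exact h.symm
  have husum : ∑ i ∈ Finset.range n, u i ≤ 2*K := by
    have h1 : ∑ i ∈ Finset.range n, eVariationOn g (Icc (a i) (a (i+1)))
        = eVariationOn g (Icc (0:ℝ) 1) := by
      have h := evar_grid_sum g a hstep n; rwa [ha0, han] at h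
    have h2 : ∑ i ∈ Finset.range n, u i
        = (∑ i ∈ Finset.range n, eVariationOn g (Icc (a i) (a (i+1)))).toReal := by
      rw [ENNReal.toReal_sum (fun i hi => hvar_fin i (Finset.mem_range.mp hi))]
    rw [h2, h1]
    calc (eVariationOn g (Icc (0:ℝ) 1)).toReal
        ≤ (ENNReal.ofReal (2*K)).toReal :=
          ENNReal.toReal_mono ENNReal.ofReal_ne_top hgvar
      _ = 2*K := ENNReal.toReal_ofReal (by linarith)
  calc (∫ x in (0:ℝ)..1, p x * β x) - (∫ x in (0:ℝ)..1, p x * β' x)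
      = ∑ i ∈ Finset.range n, ∫ x in (a i)..(a (i+1)), p x * g x := by rw [hdiff, hsplit]
    _ ≤ ∑ i ∈ Finset.range n, u i * w i :=
        Finset.sum_le_sum (fun i hi => hper i (Finset.mem_range.mp hi))
    _ ≤ ∑ i ∈ Finset.range n, u i * min (cmax / n) 1 := by
        refine Finset.sum_le_sum (fun i hi => ?_)
        exact mul_le_mul_of_nonneg_left (hw_le i (Finset.mem_range.mp hi)) (hu_nonneg i)
    _ = (∑ i ∈ Finset.range n, u i) * min (cmax / n) 1 := by rw [← Finset.sum_mul]
    _ ≤ 2 * K * min (cmax / n) 1 := mul_le_mul_of_nonneg_right husum hmin_nonneg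

lemma energy_abs_bound {p f : ℝ → ℝ} {cmax M : ℝ}
    (hp0 : ∀ x, 0 ≤ p x) (hpc : ∀ x, p x ≤ cmax)
    (hfb : ∀ x ∈ Icc (0:ℝ) 1, |f x| ≤ M) :
    |∫ x in (0:ℝ)..1, p x * f x| ≤ cmax * M := by
  have h := intervalIntegral.norm_integral_le_of_norm_le_const
    (C := cmax * M) (f := fun x => p x * f x) (a := (0:ℝ)) (b := 1) ?_
  · simpa using h
  · intro x hx
    rw [Set.uIoc_of_le (zero_le_one)] at hx
    have hx' : x ∈ Icc (0:ℝ) 1 := ⟨hx.1.le, hx.2⟩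
    have h1 := hp0 x; have h2 := hpc x; have h3 := hfb x hx'
    have h4 := abs_nonneg (f x)
    calc ‖p x * f x‖ = |p x| * |f x| := abs_mul _ _
      _ = p x * |f x| := by rw [abs_of_nonneg h1]
      _ ≤ cmax * M := by nlinarith

/-- Theorem 1, first claim (abstract form): for any nonempty set `P` of input densities
bounded by `c_max` and any `β ∈ BV_K[0,1]`,
`0 ≤ sup_{p ∈ P} ∫ p β - sup_{p ∈ P} inf_{β' ∈ Γ(β,m)} ∫ p β' ≤ 2 √c_max K (m-1)^{-1/2}`. -/
theorem worst_case_energy_loss_noiseless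
    (K cmax : ℝ) (hK : 0 < K) (hc : 0 < cmax) (m : ℕ) (hm : 2 ≤ m)
    (P : Set (ℝ → ℝ)) (hP : P.Nonempty)
    (hPdens : ∀ p ∈ P, Measurable p ∧ (∀ x, 0 ≤ p x) ∧
      (∫ x in (0:ℝ)..1, p x) = 1 ∧ (∀ x, p x ≤ cmax))
    (β : ℝ → ℝ) (hβ : β ∈ BVBall K) :
    0 ≤ sSup ((fun p => energyOf p β) '' P) -
        sSup ((fun p => sInf ((fun β' => energyOf p β') '' indistSet K β m)) '' P) ∧
    sSup ((fun p => energyOf p β) '' P) -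
        sSup ((fun p => sInf ((fun β' => energyOf p β') '' indistSet K β m)) '' P)
      ≤ 2 * Real.sqrt cmax * K * ((m:ℝ) - 1) ^ (-(1:ℝ)/2) := by
  obtain ⟨n, rfl⟩ : ∃ n : ℕ, m = n + 1 := ⟨m - 1, by omega⟩
  have hn : 1 ≤ n := by omega
  have hnR : (0:ℝ) < n := by exact_mod_cast hn
  have hcast : ((n:ℝ) + 1) - 1 = (n:ℝ) := by ring
  set B : ℝ := 2 * K * min (cmax / n) 1 with hB
  set M : ℝ := |β 0| + K with hM
  have hβmem : β ∈ indistSet K β (n+1) := ⟨hβ, fun i _ => rfl⟩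
  have hβb : ∀ x ∈ Icc (0:ℝ) 1, |β x| ≤ M := fun x hx => bvball_bound hK.le hβ hx
  -- uniform bounds for members of the indistinguishable set
  have hΓb : ∀ β' ∈ indistSet K β (n+1), ∀ x ∈ Icc (0:ℝ) 1, |β' x| ≤ M := by
    intro β' hβ' x hx
    have h0 : β' 0 = β 0 := by
      have := hβ'.2 0 (by omega)
      simpa using this
    have := bvball_bound hK.le hβ'.1 hx
    rwa [h0] at this
  -- per-p facts
  have key : ∀ p ∈ P,
      (∀ β' ∈ indistSet K β (n+1), -(cmax * M) ≤ energyOf p β' ∧ energyOf p β' ≤ cmax * M) ∧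
      energyOf p β - B ≤ sInf ((fun β' => energyOf p β') '' indistSet K β (n+1)) ∧
      sInf ((fun β' => energyOf p β') '' indistSet K β (n+1)) ≤ energyOf p β := by
    intro p hp
    obtain ⟨hpm, hp0, hp1, hpc⟩ := hPdens p hp
    have hEb : ∀ β' ∈ indistSet K β (n+1),
        -(cmax * M) ≤ energyOf p β' ∧ energyOf p β' ≤ cmax * M := by
      intro β' hβ'
      have := energy_abs_bound hp0 hpc (hΓb β' hβ')
      have h := abs_le.mp this
      exact ⟨h.1, h.2⟩
    have hne : ((fun β' => energyOf p β') '' indistSet K β (n+1)).Nonempty :=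
      ⟨energyOf p β, β, hβmem, rfl⟩
    have hbdd : BddBelow ((fun β' => energyOf p β') '' indistSet K β (n+1)) := by
      refine ⟨-(cmax * M), ?_⟩
      rintro y ⟨β', hβ', rfl⟩
      exact (hEb β' hβ').1
    refine ⟨hEb, ?_, csInf_le hbdd ⟨β, hβmem, rfl⟩⟩
    refine le_csInf hne ?_
    rintro y ⟨β', hβ', rfl⟩
    have hagree : ∀ i : ℕ, i ≤ n → β' ((i:ℝ)/(n:ℝ)) = β ((i:ℝ)/(n:ℝ)) := by
      intro i hi
      have := hβ'.2 i (by omega)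
      rwa [show (((n:ℕ)+1:ℕ):ℝ) - 1 = (n:ℝ) by push_cast; ring] at this
    have hcore := core_bound K cmax hK hc n hn p hpm hp0 hp1 hpc β β' hβ hβ'.1 hagree
    have : energyOf p β - energyOf p β' ≤ B := hcore
    linarith
  -- sup facts
  set S1 := (fun p => energyOf p β) '' P with hS1
  set S2 := (fun p => sInf ((fun β' => energyOf p β') '' indistSet K β (n+1))) '' P with hS2
  have hS1ne : S1.Nonempty := hP.image _
  have hS2ne : S2.Nonempty := hP.image _
  have hS1bdd : BddAbove S1 := by
    refine ⟨cmax * M, ?_⟩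
    rintro y ⟨p, hp, rfl⟩
    exact ((key p hp).1 β hβmem).2
  have hS2bdd : BddAbove S2 := by
    refine ⟨cmax * M, ?_⟩
    rintro y ⟨p, hp, rfl⟩
    exact ((key p hp).2.2).trans ((key p hp).1 β hβmem).2
  have hle : sSup S2 ≤ sSup S1 := by
    refine csSup_le hS2ne ?_
    rintro y ⟨p, hp, rfl⟩
    exact ((key p hp).2.2).trans (le_csSup hS1bdd ⟨p, hp, rfl⟩)
  have hub : sSup S1 ≤ sSup S2 + B := by
    refine csSup_le hS1ne ?_
    rintro y ⟨p, hp, rfl⟩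
    have h1 := (key p hp).2.1
    have h2 : sInf ((fun β' => energyOf p β') '' indistSet K β (n+1)) ≤ sSup S2 :=
      le_csSup hS2bdd ⟨p, hp, rfl⟩
    linarith
  constructor
  · linarith
  · have hfinal : B ≤ 2 * Real.sqrt cmax * K * ((n:ℝ)) ^ (-(1:ℝ)/2) := by
      have hmin : min (cmax / n) 1 ≤ Real.sqrt (cmax / n) := by
        rcases le_total (cmax / n) 1 with h | h
        · rw [min_eq_left h]
          have ht0 : (0:ℝ) ≤ cmax / n := div_nonneg hc.le hnR.le
          have h1 : Real.sqrt (cmax/n) * Real.sqrt (cmax/n) = cmax/n :=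
            Real.mul_self_sqrt ht0
          have h2 : (0:ℝ) ≤ Real.sqrt (cmax/n) := Real.sqrt_nonneg _
          have h3 : Real.sqrt (cmax/n) ≤ 1 := Real.sqrt_le_one.mpr h
          nlinarith
        · rw [min_eq_right h]
          rw [show (1:ℝ) = Real.sqrt 1 from Real.sqrt_one.symm]
          exact Real.sqrt_le_sqrt h
      have hrpow : ((n:ℝ)) ^ (-(1:ℝ)/2) = 1 / Real.sqrt n := by
        rw [neg_div, Real.rpow_neg (by positivity), ← Real.sqrt_eq_rpow, one_div]
      have hsqrt_div : Real.sqrt (cmax / n) = Real.sqrt cmax / Real.sqrt n := by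
        rw [Real.sqrt_div hc.le]
      rw [hB, hrpow]
      calc 2 * K * min (cmax / n) 1 ≤ 2 * K * (Real.sqrt cmax / Real.sqrt n) := by
            rw [← hsqrt_div]
            exact mul_le_mul_of_nonneg_left hmin (by linarith)
        _ = 2 * Real.sqrt cmax * K * (1 / Real.sqrt n) := by ring
    have hc2 : (((n+1:ℕ)):ℝ) - 1 = (n:ℝ) := by push_cast; ring
    rw [hc2]
    linarith
end

section
/- (Theorem 1, second claim, abstract form.) Let K > 0, c_max > 0, m ≥ 2, and let P be a nonempty set of measurable probability densities p on [0,1] satisfying p(x) ≤ c_max for all x. Let β ∈ BV_K[0,1] and let β̂ ∈ BV_K[0,1] satisfy β̂(i/(m−1)) = β(i/(m−1)) for all i ∈ {0,…,m−1}. Suppose p* ∈ P attains sup_{p ∈ P} ∫₀¹ p β and q* ∈ P attains sup_{p ∈ P} ∫₀¹ p β̂. Then 0 ≤ ∫₀¹ p*(x)β(x) dx − ∫₀¹ q*(x)β(x) dx ≤ 4√(c_max) · K · (m−1)^{−1/2}; that is, designing the optimal codebook as if the reconstruction β̂ were the true harvesting function incurs energy loss at most 4√(c_max) K (m−1)^{−1/2}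 under the true β. -/
open MeasureTheory

/-- If `f` has finite variation on `[a,b]` then `|f y - f a|` is bounded by the variation. -/
lemma evar_abs_sub {f : ℝ → ℝ} {a b y : ℝ} (hy : y ∈ Set.Icc a b)
    (hfin : eVariationOn f (Set.Icc a b) ≠ ⊤) (hab : a ≤ b) :
    |f y - f a| ≤ (eVariationOn f (Set.Icc a b)).toReal := by
  have h := eVariationOn.edist_le f hy (Set.left_mem_Icc.mpr hab)
  rw [edist_dist, Real.dist_eq] at h
  exact (ENNReal.ofReal_le_iff_le_toReal hfin).mp h

lemma evar_sum (f : ℝ → ℝ) {x : ℕ → ℝ} (hx : Monotone x) (j : ℕ) :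
    ∑ i ∈ Finset.range j, eVariationOn f (Set.Icc (x i) (x (i+1)))
      = eVariationOn f (Set.Icc (x 0) (x j)) := by
  induction j with
  | zero =>
      simp only [Finset.range_zero, Finset.sum_empty]
      symm
      apply eVariationOn.subsingleton
      rw [Set.Icc_self]
      exact Set.subsingleton_singleton
  | succ j ih =>
      rw [Finset.sum_range_succ, ih]
      have h := eVariationOn.Icc_add_Icc f (s := Set.univ)
        (hx (Nat.zero_le j)) (hx (Nat.le_succ j)) (Set.mem_univ (x j))
      simpa [Set.univ_inter] using h

lemma intervalIntegrable_mul_bv {p f : ℝ → ℝ} (hp : Measurable p) (hp0 : ∀ x, 0 ≤ p x)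
    {cmax : ℝ} (hpc : ∀ x, p x ≤ cmax)
    (hf : eVariationOn f (Set.Icc (0:ℝ) 1) ≠ ⊤) :
    IntervalIntegrable (fun x => p x * f x) volume 0 1 := by
  have hbv : LocallyBoundedVariationOn f (Set.Icc (0:ℝ) 1) :=
    BoundedVariationOn.locallyBoundedVariationOn hf
  obtain ⟨g, h, hg, hh, hgh⟩ := hbv.exists_monotoneOn_sub_monotoneOn
  have hmf : AEMeasurable f (volume.restrict (Set.Icc (0:ℝ) 1)) := by
    rw [hgh]
    exact (aemeasurable_restrict_of_monotoneOn measurableSet_Icc hg).sub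
      (aemeasurable_restrict_of_monotoneOn measurableSet_Icc hh)
  have hcm : 0 ≤ cmax := le_trans (hp0 0) (hpc 0)
  set C : ℝ := |f 0| + (eVariationOn f (Set.Icc (0:ℝ) 1)).toReal with hC
  have hint : IntegrableOn (fun x => p x * f x) (Set.Icc (0:ℝ) 1) volume := by
    refine Integrable.mono' (integrable_const (cmax * C))
      (hp.aemeasurable.mul hmf).aestronglyMeasurable
      ((ae_restrict_iff' measurableSet_Icc).mpr (ae_of_all _ fun x hx => ?_))
    have h1 : |f x - f 0| ≤ (eVariationOn f (Set.Icc (0:ℝ) 1)).toReal :=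
      evar_abs_sub hx hf zero_le_one
    have h2 : |f x| ≤ C := by
      have := abs_sub_abs_le_abs_sub (f x) (f 0)
      rw [hC]; linarith
    have : ‖p x * f x‖ = p x * |f x| := by
      rw [Real.norm_eq_abs, abs_mul, abs_of_nonneg (hp0 x)]
    rw [this]
    exact mul_le_mul (hpc x) h2 (abs_nonneg _) hcm
  exact (intervalIntegrable_iff_integrableOn_Icc_of_le zero_le_one).mpr hint

lemma intervalIntegrable_of_bdd {p : ℝ → ℝ} (hp : Measurable p) {cmax : ℝ}
    (hp0 : ∀ x, 0 ≤ p x) (hpc : ∀ x, p x ≤ cmax) :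
    IntervalIntegrable p volume 0 1 := by
  have hint : IntegrableOn p (Set.Icc (0:ℝ) 1) volume := by
    refine Integrable.mono' (integrable_const cmax)
      hp.aestronglyMeasurable (ae_of_all _ fun x => ?_)
    rw [Real.norm_eq_abs, abs_of_nonneg (hp0 x)]; exact hpc x
  exact (intervalIntegrable_iff_integrableOn_Icc_of_le zero_le_one).mpr hint

lemma key_bound {K cmax : ℝ} (hK : 0 < K) (hc : 0 < cmax) {n : ℕ} (hn : 1 ≤ n)
    {f g p : ℝ → ℝ} (hf : f ∈ BVBall K) (hg : g ∈ BVBall K)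
    (hagree : ∀ i : ℕ, i ≤ n → g ((i:ℝ) / (n:ℝ)) = f ((i:ℝ) / (n:ℝ)))
    (hp : Measurable p) (hp0 : ∀ x, 0 ≤ p x) (hp1 : (∫ x in (0:ℝ)..1, p x) = 1)
    (hpc : ∀ x, p x ≤ cmax) :
    (∫ x in (0:ℝ)..1, p x * f x) - (∫ x in (0:ℝ)..1, p x * g x)
      ≤ 2 * K * min 1 (cmax / (n:ℝ)) := by
  have hfinf : eVariationOn f (Set.Icc (0:ℝ) 1) ≠ ⊤ :=
    ne_top_of_le_ne_top ENNReal.ofReal_ne_top hf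
  have hfing : eVariationOn g (Set.Icc (0:ℝ) 1) ≠ ⊤ :=
    ne_top_of_le_ne_top ENNReal.ofReal_ne_top hg
  have hKf : (eVariationOn f (Set.Icc (0:ℝ) 1)).toReal ≤ K := by
    have := ENNReal.toReal_mono ENNReal.ofReal_ne_top hf
    rwa [ENNReal.toReal_ofReal hK.le] at this
  have hKg : (eVariationOn g (Set.Icc (0:ℝ) 1)).toReal ≤ K := by
    have := ENNReal.toReal_mono ENNReal.ofReal_ne_top hg
    rwa [ENNReal.toReal_ofReal hK.le] at this
  have hintf := intervalIntegrable_mul_bv hp hp0 hpc hfinf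
  have hintg := intervalIntegrable_mul_bv hp hp0 hpc hfing
  have hintp := intervalIntegrable_of_bdd hp hp0 hpc
  have hD : IntervalIntegrable (fun x => p x * f x - p x * g x) volume 0 1 :=
    hintf.sub hintg
  have hdiff : (∫ x in (0:ℝ)..1, p x * f x) - (∫ x in (0:ℝ)..1, p x * g x)
      = ∫ x in (0:ℝ)..1, (p x * f x - p x * g x) :=
    (intervalIntegral.integral_sub hintf hintg).symm
  have hnR : (0:ℝ) < n := by exact_mod_cast hn
  have hg0f0 : g 0 = f 0 := by
    have := hagree 0 (Nat.zero_le n); simpa using this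
  rcases le_total (cmax / (n:ℝ)) 1 with hle | hle
  · -- use the fine bound 2K cmax/n
    rw [min_eq_right hle, hdiff]
    set x_ : ℕ → ℝ := fun i => (i:ℝ) / (n:ℝ) with hx_
    have hxmono : Monotone x_ := by
      intro i j hij
      exact (div_le_div_iff_of_pos_right hnR).mpr (Nat.cast_le.mpr hij)
    have hx0 : x_ 0 = 0 := by simp [hx_]
    have hxn : x_ n = 1 := by
      simp only [hx_]; exact div_self (ne_of_gt hnR)
    have hsub : ∀ i, i < n → Set.Icc (x_ i) (x_ (i+1)) ⊆ Set.Icc (0:ℝ) 1 := by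
      intro i hi
      refine Set.Icc_subset_Icc ?_ ?_
      · rw [← hx0]; exact hxmono (Nat.zero_le i)
      · rw [← hxn]; exact hxmono hi
    have hfinfi : ∀ i, i < n → eVariationOn f (Set.Icc (x_ i) (x_ (i+1))) ≠ ⊤ :=
      fun i hi => ne_top_of_le_ne_top hfinf (eVariationOn.mono f (hsub i hi))
    have hfingi : ∀ i, i < n → eVariationOn g (Set.Icc (x_ i) (x_ (i+1))) ≠ ⊤ :=
      fun i hi => ne_top_of_le_ne_top hfing (eVariationOn.mono g (hsub i hi))
    set V : ℕ → ℝ := fun i => (eVariationOn f (Set.Icc (x_ i) (x_ (i+1)))).toReal with hV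
    set W : ℕ → ℝ := fun i => (eVariationOn g (Set.Icc (x_ i) (x_ (i+1)))).toReal with hW
    have hDi : ∀ i, i < n →
        IntervalIntegrable (fun x => p x * f x - p x * g x) volume (x_ i) (x_ (i+1)) := by
      intro i hi
      refine hD.mono_set ?_
      rw [Set.uIcc_of_le (hxmono (Nat.le_succ i)), Set.uIcc_of_le zero_le_one]
      exact hsub i hi
    have hpi : ∀ i, i < n → IntervalIntegrable p volume (x_ i) (x_ (i+1)) := by
      intro i hi
      refine hintp.mono_set ?_
      rw [Set.uIcc_of_le (hxmono (Nat.le_succ i)), Set.uIcc_of_le zero_le_one]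
      exact hsub i hi
    have hlen : ∀ i : ℕ, x_ (i+1) - x_ i = 1 / (n:ℝ) := by
      intro i
      simp only [hx_]
      push_cast
      field_simp
      ring
    have hterm : ∀ i, i < n →
        (∫ x in (x_ i)..(x_ (i+1)), (p x * f x - p x * g x))
          ≤ (V i + W i) * (cmax / (n:ℝ)) := by
      intro i hi
      have hVW0 : 0 ≤ V i + W i := add_nonneg ENNReal.toReal_nonneg ENNReal.toReal_nonneg
      have hpoint : ∀ y ∈ Set.Icc (x_ i) (x_ (i+1)),
          p y * f y - p y * g y ≤ p y * (V i + W i) := by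
        intro y hy
        have hagi : g (x_ i) = f (x_ i) := hagree i (le_of_lt hi)
        have h1 : |f y - f (x_ i)| ≤ V i :=
          evar_abs_sub hy (hfinfi i hi) (hxmono (Nat.le_succ i))
        have h2 : |g y - g (x_ i)| ≤ W i :=
          evar_abs_sub hy (hfingi i hi) (hxmono (Nat.le_succ i))
        have h1' := abs_le.mp h1
        have h2' := abs_le.mp h2
        have hfy : f y - g y ≤ V i + W i := by
          have : f y - g y = (f y - f (x_ i)) - (g y - g (x_ i)) := by
            rw [hagi]; ring
          rw [this]; linarith [h1'.2, h2'.1]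
        calc p y * f y - p y * g y = p y * (f y - g y) := by ring
          _ ≤ p y * (V i + W i) := mul_le_mul_of_nonneg_left hfy (hp0 y)
      calc (∫ x in (x_ i)..(x_ (i+1)), (p x * f x - p x * g x))
          ≤ ∫ x in (x_ i)..(x_ (i+1)), p x * (V i + W i) :=
            intervalIntegral.integral_mono_on (hxmono (Nat.le_succ i)) (hDi i hi)
              ((hpi i hi).mul_const _) hpoint
        _ = (∫ x in (x_ i)..(x_ (i+1)), p x) * (V i + W i) :=
            intervalIntegral.integral_mul_const _ _
        _ ≤ ((x_ (i+1) - x_ i) * cmax) * (V i + W i) := by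
            refine mul_le_mul_of_nonneg_right ?_ hVW0
            have := intervalIntegral.integral_mono_on (μ := volume)
              (hxmono (Nat.le_succ i)) (hpi i hi) intervalIntegrable_const
              (fun x _ => hpc x)
            simpa [smul_eq_mul] using this
        _ = (V i + W i) * (cmax / (n:ℝ)) := by
            rw [hlen i]; ring
    have hsplit : (∫ x in (0:ℝ)..1, (p x * f x - p x * g x))
        = ∑ i ∈ Finset.range n, ∫ x in (x_ i)..(x_ (i+1)), (p x * f x - p x * g x) := by
      rw [intervalIntegral.sum_integral_adjacent_intervals hDi, hx0, hxn]
    have hsumV : ∑ i ∈ Finset.range n, V i ≤ K := by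
      have h1 : ∑ i ∈ Finset.range n, V i
          = (∑ i ∈ Finset.range n, eVariationOn f (Set.Icc (x_ i) (x_ (i+1)))).toReal := by
        rw [ENNReal.toReal_sum (fun i hi => hfinfi i (Finset.mem_range.mp hi))]
      rw [h1, evar_sum f hxmono n, hx0, hxn]
      exact hKf
    have hsumW : ∑ i ∈ Finset.range n, W i ≤ K := by
      have h1 : ∑ i ∈ Finset.range n, W i
          = (∑ i ∈ Finset.range n, eVariationOn g (Set.Icc (x_ i) (x_ (i+1)))).toReal := by
        rw [ENNReal.toReal_sum (fun i hi => hfingi i (Finset.mem_range.mp hi))]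
      rw [h1, evar_sum g hxmono n, hx0, hxn]
      exact hKg
    have hcn : 0 ≤ cmax / (n:ℝ) := le_of_lt (div_pos hc hnR)
    calc (∫ x in (0:ℝ)..1, (p x * f x - p x * g x))
        = ∑ i ∈ Finset.range n, ∫ x in (x_ i)..(x_ (i+1)), (p x * f x - p x * g x) := hsplit
      _ ≤ ∑ i ∈ Finset.range n, (V i + W i) * (cmax / (n:ℝ)) :=
          Finset.sum_le_sum (fun i hi => hterm i (Finset.mem_range.mp hi))
      _ = ((∑ i ∈ Finset.range n, V i) + (∑ i ∈ Finset.range n, W i)) * (cmax / (n:ℝ)) := by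
          rw [← Finset.sum_add_distrib, ← Finset.sum_mul]
      _ ≤ (K + K) * (cmax / (n:ℝ)) := by
          exact mul_le_mul_of_nonneg_right (add_le_add hsumV hsumW) hcn
      _ = 2 * K * (cmax / (n:ℝ)) := by ring
  · -- use the crude bound 2K
    rw [min_eq_left hle, hdiff, mul_one]
    have hpoint : ∀ x ∈ Set.Icc (0:ℝ) 1, p x * f x - p x * g x ≤ p x * (2 * K) := by
      intro x hx
      have h1 := abs_le.mp (le_trans (evar_abs_sub hx hfinf zero_le_one) hKf)
      have h2 := abs_le.mp (le_trans (evar_abs_sub hx hfing zero_le_one) hKg)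
      have hfg : f x - g x ≤ 2 * K := by
        have : f x - g x = (f x - f 0) - (g x - g 0) := by rw [hg0f0]; ring
        rw [this]; linarith [h1.2, h2.1]
      calc p x * f x - p x * g x = p x * (f x - g x) := by ring
        _ ≤ p x * (2 * K) := mul_le_mul_of_nonneg_left hfg (hp0 x)
    calc (∫ x in (0:ℝ)..1, (p x * f x - p x * g x))
        ≤ ∫ x in (0:ℝ)..1, p x * (2 * K) :=
          intervalIntegral.integral_mono_on zero_le_one hD (hintp.mul_const _) hpoint
      _ = (∫ x in (0:ℝ)..1, p x) * (2 * K) := intervalIntegral.integral_mul_const _ _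
      _ = 2 * K := by rw [hp1]; ring

/-- Theorem 1, second claim (abstract form): if `β̂ ∈ BV_K[0,1]` agrees with
`β ∈ BV_K[0,1]` at the `m` grid points `i/(m-1)`, `p*` attains `sup_{p ∈ P} ∫ p β` and
`q*` attains `sup_{p ∈ P} ∫ p β̂`, then
`0 ≤ ∫ p* β - ∫ q* β ≤ 4 √c_max K (m-1)^{-1/2}`: designing the optimal codebook as if
the reconstruction `β̂` were the true harvesting function incurs energy loss at most
`4 √c_max K (m-1)^{-1/2}` under the true `β`. -/
theorem reconstruction_based_design_energy_loss_noiseless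
    (K cmax : ℝ) (hK : 0 < K) (hc : 0 < cmax) (m : ℕ) (hm : 2 ≤ m)
    (P : Set (ℝ → ℝ)) (hP : P.Nonempty)
    (hPdens : ∀ p ∈ P, Measurable p ∧ (∀ x, 0 ≤ p x) ∧
      (∫ x in (0:ℝ)..1, p x) = 1 ∧ (∀ x, p x ≤ cmax))
    (β βhat : ℝ → ℝ) (hβ : β ∈ BVBall K) (hβhat : βhat ∈ BVBall K)
    (hagree : ∀ i : ℕ, i < m → βhat ((i:ℝ) / ((m:ℝ) - 1)) = β ((i:ℝ) / ((m:ℝ) - 1)))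
    (pstar qstar : ℝ → ℝ) (hpmem : pstar ∈ P) (hqmem : qstar ∈ P)
    (hpopt : ∀ p ∈ P, energyOf p β ≤ energyOf pstar β)
    (hqopt : ∀ p ∈ P, energyOf p βhat ≤ energyOf qstar βhat) :
    0 ≤ energyOf pstar β - energyOf qstar β ∧
    energyOf pstar β - energyOf qstar β
      ≤ 4 * Real.sqrt cmax * K * ((m:ℝ) - 1) ^ (-(1:ℝ)/2) := by
  set n : ℕ := m - 1 with hn_def
  have hn : 1 ≤ n := by omega
  have hcast : ((n:ℕ):ℝ) = (m:ℝ) - 1 := by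
    rw [hn_def, Nat.cast_sub (by omega : 1 ≤ m), Nat.cast_one]
  have hnR : (0:ℝ) < (n:ℝ) := by exact_mod_cast hn
  have hagree' : ∀ i : ℕ, i ≤ n → βhat ((i:ℝ) / (n:ℝ)) = β ((i:ℝ) / (n:ℝ)) := by
    intro i hi
    rw [hcast]
    exact hagree i (by omega)
  obtain ⟨hpm, hp0, hp1, hpc⟩ := hPdens pstar hpmem
  obtain ⟨hqm, hq0, hq1, hqc⟩ := hPdens qstar hqmem
  constructor
  · exact sub_nonneg.mpr (hpopt qstar hqmem)
  · have h1 : energyOf pstar β - energyOf pstar βhat ≤ 2 * K * min 1 (cmax / (n:ℝ)) :=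
      key_bound hK hc hn hβ hβhat hagree' hpm hp0 hp1 hpc
    have h2 : energyOf qstar βhat - energyOf qstar β ≤ 2 * K * min 1 (cmax / (n:ℝ)) :=
      key_bound hK hc hn hβhat hβ (fun i hi => (hagree' i hi).symm) hqm hq0 hq1 hqc
    have h3 : energyOf pstar βhat ≤ energyOf qstar βhat := hqopt pstar hpmem
    have hloss : energyOf pstar β - energyOf qstar β ≤ 4 * K * min 1 (cmax / (n:ℝ)) := by
      have := h1; have := h2; have := h3
      unfold energyOf at *
      linarith
    refine le_trans hloss ?_
    rw [← hcast]
    have hrpow : ((n:ℝ)) ^ (-(1:ℝ)/2) = (Real.sqrt (n:ℝ))⁻¹ := by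
      rw [show (-(1:ℝ)/2) = -(1/2 : ℝ) by ring, Real.rpow_neg hnR.le, ← Real.sqrt_eq_rpow]
    rw [hrpow]
    have hsn : 0 < Real.sqrt (n:ℝ) := Real.sqrt_pos.mpr hnR
    set t : ℝ := Real.sqrt (cmax / (n:ℝ)) with ht
    have ht0 : 0 ≤ t := Real.sqrt_nonneg _
    have ht2 : t ^ 2 = cmax / (n:ℝ) := Real.sq_sqrt (le_of_lt (div_pos hc hnR))
    have hteq : Real.sqrt cmax * (Real.sqrt (n:ℝ))⁻¹ = t := by
      rw [ht, Real.sqrt_div hc.le, div_eq_mul_inv]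
    have hmin : min 1 (cmax / (n:ℝ)) ≤ t := by
      rcases le_total (cmax / (n:ℝ)) 1 with h | h
      · rw [min_eq_right h]
        have htle1 : t ≤ 1 := by
          have := Real.sqrt_le_sqrt h
          simpa [ht] using this
        nlinarith [ht2, ht0, htle1]
      · rw [min_eq_left h]
        nlinarith [ht2, ht0]
    calc 4 * K * min 1 (cmax / (n:ℝ)) ≤ 4 * K * t :=
        mul_le_mul_of_nonneg_left hmin (by positivity)
      _ = 4 * Real.sqrt cmax * K * (Real.sqrt (n:ℝ))⁻¹ := by rw [← hteq]; ring
end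

section
/- There exists a universal constant C > 0 such that for every f : [0,1] → ℝ of total variation TV(f) on [0,1] and every T > 0, the number of Haar indices (j,k) with j ≥ 0, 0 ≤ k ≤ 2^j − 1, whose coefficients satisfy |θ_{j,k}(f)| ≥ T is at most C · (TV(f)/T)^{2/3}. -/
open MeasureTheory

open scoped ENNReal

lemma measurable_haarMother : Measurable haarMother := by
  unfold haarMother
  refine Measurable.ite ?_ measurable_const (Measurable.ite ?_ measurable_const measurable_const)
  · exact (measurableSet_Ico : MeasurableSet (Set.Ico (0:ℝ) (1/2)))
  · exact (measurableSet_Ico : MeasurableSet (Set.Ico (1/2:ℝ) 1))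

lemma abs_haarMother_le (x : ℝ) : |haarMother x| ≤ 1 := by
  unfold haarMother
  split_ifs <;> norm_num

lemma measurable_haarChild (j k : ℕ) : Measurable (haarChild j k) := by
  unfold haarChild
  exact (measurable_haarMother.comp (by fun_prop)).const_mul _

lemma integrableOn_of_bv {f : ℝ → ℝ} (h : eVariationOn f (Set.Icc (0:ℝ) 1) ≠ ⊤) :
    IntegrableOn f (Set.Icc (0:ℝ) 1) := by
  obtain ⟨p, q, hp, hq, hpq⟩ :=
    (BoundedVariationOn.locallyBoundedVariationOn h).exists_monotoneOn_sub_monotoneOn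
  have h01 : Set.uIcc (0:ℝ) 1 = Set.Icc 0 1 := Set.uIcc_of_le (by norm_num)
  have hip : IntervalIntegrable p volume 0 1 := (h01 ▸ hp).intervalIntegrable
  have hiq : IntervalIntegrable q volume 0 1 := (h01 ▸ hq).intervalIntegrable
  have : IntegrableOn f (Set.Ioc (0:ℝ) 1) := by
    rw [hpq]
    exact ((intervalIntegrable_iff_integrableOn_Ioc_of_le (by norm_num)).1 hip).sub
      ((intervalIntegrable_iff_integrableOn_Ioc_of_le (by norm_num)).1 hiq)
  rwa [integrableOn_Icc_iff_integrableOn_Ioc]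

lemma coeff_bound {f : ℝ → ℝ} (hfin : eVariationOn f (Set.Icc (0:ℝ) 1) ≠ ⊤)
    {j k : ℕ} (hk : k < 2 ^ j) :
    2 * (2:ℝ) ^ ((j:ℝ)/2) * |haarCoeff j k f| ≤
      (eVariationOn f (Set.Icc ((k:ℝ)/2^j) (((k:ℝ)+1)/2^j))).toReal := by
  have hP : (0:ℝ) < 2 ^ j := by positivity
  obtain ⟨P, hPdef⟩ : ∃ P : ℝ, P = 2 ^ j := ⟨_, rfl⟩
  rw [← hPdef] at hP
  obtain ⟨c, hcdef⟩ : ∃ c : ℝ, c = (2:ℝ) ^ ((j:ℝ)/2) := ⟨_, rfl⟩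
  rw [← hcdef]
  have hc : 0 < c := hcdef ▸ Real.rpow_pos_of_pos (by norm_num) _
  have hcc : c * c = P := by
    rw [hcdef, ← Real.rpow_add (by norm_num), hPdef, ← Real.rpow_natCast 2 j]
    norm_num
  obtain ⟨h, hhdef⟩ : ∃ h : ℝ, h = 1 / (2 * P) := ⟨_, rfl⟩
  have hh : 0 < h := by rw [hhdef]; positivity
  obtain ⟨a, hadef⟩ : ∃ a : ℝ, a = (k:ℝ) / P := ⟨_, rfl⟩
  obtain ⟨m, hmdef⟩ : ∃ m : ℝ, m = a + h := ⟨_, rfl⟩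
  obtain ⟨b, hbdef⟩ : ∃ b : ℝ, b = m + h := ⟨_, rfl⟩
  have ha0 : 0 ≤ a := by rw [hadef]; positivity
  have ham : a < m := by rw [hmdef]; linarith
  have hmb : m < b := by rw [hbdef]; linarith
  have hb : b = ((k:ℝ)+1)/P := by
    rw [hbdef, hmdef, hadef, hhdef]; field_simp; ring
  have hb1 : b ≤ 1 := by
    rw [hb, div_le_one hP, hPdef]
    have : ((k:ℕ):ℝ) + 1 ≤ ((2^j : ℕ) : ℝ) := by
      exact_mod_cast Nat.succ_le_of_lt hk
    push_cast at this
    linarith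
  have hsub : Set.Icc a b ⊆ Set.Icc (0:ℝ) 1 :=
    Set.Icc_subset_Icc ha0 hb1
  have hVle : eVariationOn f (Set.Icc a b) ≤ eVariationOn f (Set.Icc (0:ℝ) 1) :=
    eVariationOn.mono f hsub
  have hVfin : eVariationOn f (Set.Icc a b) ≠ ⊤ := fun hB => hfin (top_le_iff.1 (hB ▸ hVle))
  obtain ⟨V, hVdef⟩ : ∃ V : ℝ, V = (eVariationOn f (Set.Icc a b)).toReal := ⟨_, rfl⟩
  have hV0 : 0 ≤ V := hVdef ▸ ENNReal.toReal_nonneg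
  -- integrability of f on subintervals
  have hf01 : IntegrableOn f (Set.Ioc (0:ℝ) 1) :=
    (integrableOn_of_bv hfin).mono_set Set.Ioc_subset_Icc_self
  have hfint : ∀ x y : ℝ, 0 ≤ x → x ≤ y → y ≤ 1 → IntervalIntegrable f volume x y := by
    intro x y hx hxy hy1
    rw [intervalIntegrable_iff_integrableOn_Ioc_of_le hxy]
    exact hf01.mono_set (Set.Ioc_subset_Ioc hx hy1)
  -- integrability of the product
  have hprod : ∀ x y : ℝ, 0 ≤ x → x ≤ y → y ≤ 1 →
      IntervalIntegrable (fun t => f t * haarChild j k t) volume x y := by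
    intro x y hx hxy hy1
    rw [intervalIntegrable_iff_integrableOn_Ioc_of_le hxy]
    have : IntegrableOn (fun t => haarChild j k t * f t) (Set.Ioc x y) := by
      refine Integrable.bdd_mul (c := c) ?_ ((measurable_haarChild j k).aestronglyMeasurable) (Filter.Eventually.of_forall fun t => ?_)
      · exact hf01.mono_set (Set.Ioc_subset_Ioc hx hy1)
      · rw [haarChild]
        rw [norm_mul]
        calc ‖(2:ℝ) ^ ((j:ℝ)/2)‖ * ‖haarMother ((2:ℝ)^(j:ℕ) * t - (k:ℝ))‖
            ≤ c * 1 := by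
              apply mul_le_mul _ (abs_haarMother_le _) (abs_nonneg _) hc.le
              rw [Real.norm_eq_abs, hcdef, abs_of_pos (hcdef ▸ hc)]
          _ = c := mul_one c
    exact this.congr_fun (fun t _ => mul_comm _ _) measurableSet_Ioc
  have hne : ∀ y : ℝ, ∀ᵐ x : ℝ, x ≠ y := fun y => by
    refine ae_iff.2 ?_; simpa using measure_singleton y
  have ha1 : a ≤ 1 := le_trans (le_trans ham.le hmb.le) hb1
  have hm1 : m ≤ 1 := le_trans hmb.le hb1
  have hPa : P * a = (k:ℝ) := by rw [hadef]; field_simp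
  have hPh : P * h = 1/2 := by rw [hhdef]; field_simp
  have hPm : P * m = (k:ℝ) + 1/2 := by rw [hmdef, mul_add, hPa, hPh]
  have hPb : P * b = (k:ℝ) + 1 := by rw [hbdef, mul_add, hPm, hPh]; ring
  have hchild : ∀ x : ℝ, f x * haarChild j k x = f x * (c * haarMother (P * x - k)) := by
    intro x; rw [hPdef, hcdef]; rfl
  -- four pieces
  have I0 : (∫ x in (0:ℝ)..a, f x * haarChild j k x) = 0 := by
    have : ∀ᵐ x : ℝ, x ∈ Set.uIoc (0:ℝ) a → f x * haarChild j k x = (fun _ => (0:ℝ)) x := by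
      filter_upwards [hne a] with x hxa hx
      rw [Set.uIoc_of_le ha0] at hx
      have hxlt : x < a := lt_of_le_of_ne hx.2 hxa
      have hm0 : haarMother (P * x - k) = 0 := by
        rw [haarMother, if_neg, if_neg] <;> push_neg <;> intro h1 <;>
          linarith [mul_lt_mul_of_pos_left hxlt hP, hPa]
      rw [hchild x, hm0, mul_zero, mul_zero]
    rw [intervalIntegral.integral_congr_ae this]; simp
  have I1 : (∫ x in a..m, f x * haarChild j k x) = c * ∫ x in a..m, f x := by
    rw [← intervalIntegral.integral_const_mul]
    apply intervalIntegral.integral_congr_ae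
    filter_upwards [hne m] with x hxm hx
    rw [Set.uIoc_of_le ham.le] at hx
    have h1 : a < x := hx.1
    have h2 : x < m := lt_of_le_of_ne hx.2 hxm
    have hm1' : haarMother (P * x - k) = 1 := by
      rw [haarMother, if_pos]
      constructor
      · linarith [mul_lt_mul_of_pos_left h1 hP, hPa]
      · linarith [mul_lt_mul_of_pos_left h2 hP, hPm]
    rw [hchild x, hm1', mul_one]; ring
  have I2 : (∫ x in m..b, f x * haarChild j k x) = -(c * ∫ x in m..b, f x) := by
    have : (∫ x in m..b, f x * haarChild j k x) = ∫ x in m..b, (-c) * f x := by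
      apply intervalIntegral.integral_congr_ae
      filter_upwards [hne b] with x hxb hx
      rw [Set.uIoc_of_le hmb.le] at hx
      have h1 : m < x := hx.1
      have h2 : x < b := lt_of_le_of_ne hx.2 hxb
      have hm2 : haarMother (P * x - k) = -1 := by
        rw [haarMother, if_neg, if_pos]
        · constructor
          · linarith [mul_lt_mul_of_pos_left h1 hP, hPm]
          · linarith [mul_lt_mul_of_pos_left h2 hP, hPb]
        · push_neg; intro h3; linarith [mul_lt_mul_of_pos_left h1 hP, hPm]
      rw [hchild x, hm2]; ring
    rw [this, intervalIntegral.integral_const_mul]; ring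
  have I3 : (∫ x in b..(1:ℝ), f x * haarChild j k x) = 0 := by
    have : ∀ᵐ x : ℝ, x ∈ Set.uIoc b (1:ℝ) → f x * haarChild j k x = (fun _ => (0:ℝ)) x := by
      filter_upwards with x hx
      rw [Set.uIoc_of_le hb1] at hx
      have h1 : b < x := hx.1
      have hm0 : haarMother (P * x - k) = 0 := by
        rw [haarMother, if_neg, if_neg] <;> push_neg <;> intro h3 <;>
          linarith [mul_lt_mul_of_pos_left h1 hP, hPb]
      rw [hchild x, hm0, mul_zero, mul_zero]
    rw [intervalIntegral.integral_congr_ae this]; simp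
  -- splitting
  have hsplit : haarCoeff j k f = c * ((∫ x in a..m, f x) - ∫ x in m..b, f x) := by
    have e1 : (∫ x in (0:ℝ)..a, f x * haarChild j k x) + (∫ x in a..(1:ℝ), f x * haarChild j k x)
        = haarCoeff j k f :=
      intervalIntegral.integral_add_adjacent_intervals (hprod 0 a le_rfl ha0 ha1)
        (hprod a 1 ha0 ha1 le_rfl)
    have e2 : (∫ x in a..m, f x * haarChild j k x) + (∫ x in m..(1:ℝ), f x * haarChild j k x)
        = ∫ x in a..(1:ℝ), f x * haarChild j k x :=
      intervalIntegral.integral_add_adjacent_intervals (hprod a m ha0 ham.le hm1)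
        (hprod m 1 (le_trans ha0 ham.le) hm1 le_rfl)
    have e3 : (∫ x in m..b, f x * haarChild j k x) + (∫ x in b..(1:ℝ), f x * haarChild j k x)
        = ∫ x in m..(1:ℝ), f x * haarChild j k x :=
      intervalIntegral.integral_add_adjacent_intervals (hprod m b (le_trans ha0 ham.le) hmb.le hb1)
        (hprod b 1 (le_trans (le_trans ha0 ham.le) hmb.le) hb1 le_rfl)
    rw [← e1, ← e2, ← e3, I0, I1, I2, I3]
    ring
  -- difference as single integral
  have hfam : IntervalIntegrable f volume a m := hfint a m ha0 ham.le hm1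
  have hfmb : IntervalIntegrable f volume m b := hfint m b (le_trans ha0 ham.le) hmb.le hb1
  have hshift : IntervalIntegrable (fun x => f (x + h)) volume a m := by
    have := hfmb.comp_add_right h
    rwa [show m - h = a by rw [hmdef]; ring, show b - h = m by rw [hbdef]; ring] at this
  have hdiff : (∫ x in a..m, f x) - (∫ x in m..b, f x) = ∫ x in a..m, (f x - f (x + h)) := by
    rw [intervalIntegral.integral_sub hfam hshift, intervalIntegral.integral_comp_add_right f h,
      show a + h = m by rw [hmdef], show m + h = b by rw [hbdef]]
  -- bound the integral
  have hbnd : ∀ x ∈ Set.uIoc a m, ‖f x - f (x + h)‖ ≤ V := by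
    intro x hx
    rw [Set.uIoc_of_le ham.le] at hx
    have hx1 : x ∈ Set.Icc a b := ⟨hx.1.le, le_trans hx.2 hmb.le⟩
    have hx2 : x + h ∈ Set.Icc a b := by
      constructor
      · linarith [hx.1.le, hh.le]
      · have : x + h ≤ m + h := by linarith [hx.2]
        rwa [← hbdef] at this
    have hed : edist (f x) (f (x + h)) ≤ eVariationOn f (Set.Icc a b) :=
      eVariationOn.edist_le f hx1 hx2
    have : dist (f x) (f (x + h)) ≤ V := by
      rw [dist_edist, hVdef]
      exact ENNReal.toReal_mono hVfin hed
    rwa [Real.dist_eq] at this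
  have hDle : |(∫ x in a..m, (f x - f (x + h)))| ≤ V * |m - a| :=
    intervalIntegral.norm_integral_le_of_norm_le_const hbnd
  have hma : |m - a| = h := by rw [hmdef, add_sub_cancel_left, abs_of_pos hh]
  -- assemble
  have hcoeff : |haarCoeff j k f| ≤ c * (V * h) := by
    rw [hsplit, abs_mul, abs_of_pos hc, hdiff]
    rw [hma] at hDle
    exact mul_le_mul_of_nonneg_left hDle hc.le
  have hVeq : (eVariationOn f (Set.Icc ((k:ℝ)/2^j) (((k:ℝ)+1)/2^j))).toReal = V := by
    rw [hVdef, hadef, hb, hPdef]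
  rw [hVeq]
  have hch : 2 * (c * c) * h = 1 := by rw [hcc, hhdef]; field_simp
  calc 2 * c * |haarCoeff j k f| ≤ 2 * c * (c * (V * h)) := by
        apply mul_le_mul_of_nonneg_left hcoeff; positivity
    _ = (2 * (c * c) * h) * V := by ring
    _ = V := by rw [hch, one_mul]

lemma sum_eVar (f : ℝ → ℝ) (j : ℕ) (n : ℕ) :
    ∑ k ∈ Finset.range n, eVariationOn f (Set.Icc ((k:ℝ)/2^j) (((k:ℝ)+1)/2^j))
      = eVariationOn f (Set.Icc 0 ((n:ℝ)/2^j)) := by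
  induction n with
  | zero => simp
  | succ n ih =>
    rw [Finset.sum_range_succ, ih]
    have h1 : (0:ℝ) ≤ (n:ℝ)/2^j := by positivity
    have h2 : (n:ℝ)/2^j ≤ ((n:ℝ)+1)/2^j := by
      apply (div_le_div_iff_of_pos_right (by positivity : (0:ℝ) < 2^j)).2
      linarith
    have key := eVariationOn.Icc_add_Icc f (s := (Set.univ : Set ℝ)) h1 h2 (Set.mem_univ _)
    simp only [Set.univ_inter] at key
    rw [key]
    congr 1
    push_cast
    ring

lemma level_bound {f : ℝ → ℝ} {TV : ℝ} (hTV : 0 ≤ TV)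
    (hBV : eVariationOn f (Set.Icc (0:ℝ) 1) = ENNReal.ofReal TV)
    {T : ℝ} (j : ℕ) (s : Finset ℕ)
    (hs : ∀ k ∈ s, k < 2^j ∧ T ≤ |haarCoeff j k f|) :
    (s.card : ℝ) * (2 * (2:ℝ)^((j:ℝ)/2) * T) ≤ TV := by
  have hfin : eVariationOn f (Set.Icc (0:ℝ) 1) ≠ ⊤ := by
    rw [hBV]; exact ENNReal.ofReal_ne_top
  set g : ℕ → ℝ≥0∞ := fun k => eVariationOn f (Set.Icc ((k:ℝ)/2^j) (((k:ℝ)+1)/2^j)) with hgdef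
  have htot : ∑ k ∈ Finset.range (2^j), g k = eVariationOn f (Set.Icc (0:ℝ) 1) := by
    rw [hgdef, sum_eVar f j (2^j)]
    congr 2
    have : ((2^j : ℕ) : ℝ) = (2:ℝ)^j := by push_cast; ring
    rw [this, div_self (by positivity)]
  have hgfin : ∀ k ∈ Finset.range (2^j), g k ≠ ⊤ := by
    intro k hk
    have hle : g k ≤ ∑ i ∈ Finset.range (2^j), g i :=
      Finset.single_le_sum (fun i _ => zero_le) hk
    rw [htot, hBV] at hle
    exact fun hc => ENNReal.ofReal_ne_top (top_le_iff.1 (hc ▸ hle))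
  have hsum_toReal : ∑ k ∈ Finset.range (2^j), (g k).toReal ≤ TV := by
    rw [← ENNReal.toReal_sum hgfin, htot, hBV, ENNReal.toReal_ofReal hTV]

  have hsub : s ⊆ Finset.range (2^j) := fun k hk => Finset.mem_range.2 (hs k hk).1
  have hstep : ∀ k ∈ s, 2 * (2:ℝ)^((j:ℝ)/2) * T ≤ (g k).toReal := by
    intro k hk
    have h1 := coeff_bound hfin (hs k hk).1
    have h2 : 2 * (2:ℝ)^((j:ℝ)/2) * T ≤ 2 * (2:ℝ)^((j:ℝ)/2) * |haarCoeff j k f| := by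
      apply mul_le_mul_of_nonneg_left (hs k hk).2
      positivity
    exact le_trans h2 h1
  calc (s.card : ℝ) * (2 * (2:ℝ)^((j:ℝ)/2) * T)
      = ∑ _k ∈ s, 2 * (2:ℝ)^((j:ℝ)/2) * T := by
        rw [Finset.sum_const, nsmul_eq_mul]
    _ ≤ ∑ k ∈ s, (g k).toReal := Finset.sum_le_sum hstep
    _ ≤ ∑ k ∈ Finset.range (2^j), (g k).toReal := by
        apply Finset.sum_le_sum_of_subset_of_nonneg hsub
        intro k _ _
        exact ENNReal.toReal_nonneg
    _ ≤ TV := hsum_toReal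

lemma qpow (n : ℕ) : ((2:ℝ)^(-(1:ℝ)/2))^n = (2:ℝ)^(-(n:ℝ)/2) := by
  rw [← Real.rpow_natCast ((2:ℝ)^(-(1:ℝ)/2)) n, ← Real.rpow_mul (by norm_num)]
  ring_nf

lemma rpow_half_pos (j : ℕ) : (0:ℝ) < (2:ℝ)^((j:ℝ)/2) := Real.rpow_pos_of_pos (by norm_num) _

set_option maxHeartbeats 1000000 in
/-- There is a universal constant `C > 0` such that for every `f : [0,1] → ℝ` of total
variation `TV` on `[0,1]` and every threshold `T > 0`, the number of Haar indices `(j,k)`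
with `j ≥ 0`, `0 ≤ k ≤ 2^j - 1` and `|θ_{j,k}(f)| ≥ T` is at most `C (TV/T)^{2/3}`. -/
theorem card_large_haar_coeffs_le :
    ∃ C : ℝ, 0 < C ∧ ∀ f : ℝ → ℝ, ∀ TV : ℝ, 0 ≤ TV →
      eVariationOn f (Set.Icc (0:ℝ) 1) = ENNReal.ofReal TV →
      ∀ T : ℝ, 0 < T →
        {p : ℕ × ℕ | p.2 < 2 ^ p.1 ∧ T ≤ |haarCoeff p.1 p.2 f|}.Finite ∧
        (Nat.card {p : ℕ × ℕ | p.2 < 2 ^ p.1 ∧ T ≤ |haarCoeff p.1 p.2 f|} : ℝ)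
          ≤ C * (TV / T) ^ ((2:ℝ)/3) := by
  classical
  refine ⟨100, by norm_num, ?_⟩
  intro f TV hTV hBV T hT
  set S := {p : ℕ × ℕ | p.2 < 2 ^ p.1 ∧ T ≤ |haarCoeff p.1 p.2 f|} with hSdef
  set r := TV / T with hrdef
  have hr0 : 0 ≤ r := div_nonneg hTV hT.le
  have hrpow0 : (0:ℝ) ≤ r ^ ((2:ℝ)/3) := Real.rpow_nonneg hr0 _
  have hTVrT : TV = r * T := by rw [hrdef]; field_simp
  -- singleton bound
  have hsing : ∀ p : ℕ × ℕ, p ∈ S → 2 * (2:ℝ)^((p.1:ℝ)/2) * T ≤ TV := by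
    intro p hp
    have hp' : p.2 < 2 ^ p.1 ∧ T ≤ |haarCoeff p.1 p.2 f| := hp
    have := level_bound hTV hBV p.1 {p.2} (by intro k hk; rw [Finset.mem_singleton] at hk; subst hk; exact hp')
    simpa using this
  -- members have small scale
  obtain ⟨J, hJn⟩ := exists_nat_gt r
  have hJ2 : r < (2:ℝ)^J := lt_of_lt_of_le hJn (by exact_mod_cast (Nat.lt_two_pow_self (n := J)).le)
  have hmemj : ∀ p ∈ S, p.1 < 2*J := by
    intro p hp
    by_contra hcon
    push_neg at hcon
    have h1 : (J:ℝ) ≤ (p.1:ℝ)/2 := by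
      have : ((2*J : ℕ):ℝ) ≤ (p.1:ℝ) := by exact_mod_cast hcon
      push_cast at this; linarith
    have h2 : (2:ℝ)^(J:ℝ) ≤ (2:ℝ)^((p.1:ℝ)/2) :=
      Real.rpow_le_rpow_of_exponent_le (by norm_num) h1
    rw [Real.rpow_natCast] at h2
    have h3 := hsing p hp
    have h4 : 2 * (2:ℝ)^((p.1:ℝ)/2) ≤ r := by
      rw [hrdef, le_div_iff₀ hT]; linarith
    have h5 := rpow_half_pos p.1
    linarith
  -- finiteness
  have hsub : S ⊆ ↑(Finset.range (2*J) ×ˢ Finset.range (2^(2*J))) := by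
    intro p hp
    have h1 := hmemj p hp
    have h2 : p.2 < 2^(2*J) := lt_of_lt_of_le hp.1 (Nat.pow_le_pow_right (by norm_num) h1.le)
    simp only [Finset.coe_product, Set.mem_prod, Finset.mem_coe, Finset.mem_range]
    exact ⟨h1, h2⟩
  have hfinS : S.Finite := Set.Finite.subset (Finset.range (2*J) ×ˢ Finset.range (2^(2*J))).finite_toSet hsub
  refine ⟨hfinS, ?_⟩
  set A := hfinS.toFinset with hAdef
  have hAS : ∀ p : ℕ × ℕ, p ∈ A ↔ p ∈ S := fun p => hfinS.mem_toFinset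
  have hcard : (Nat.card S : ℝ) = (A.card : ℝ) := by
    rw [Nat.card_coe_set_eq, Set.ncard_eq_toFinset_card S hfinS]
  rw [hcard]
  -- fiberwise
  have hfiber : A.card = ∑ j ∈ Finset.range (2*J), (A.filter fun p => p.1 = j).card :=
    Finset.card_eq_sum_card_fiberwise (fun p hp => Finset.mem_range.2 (hmemj p ((hAS p).1 hp)))
  -- fiber bounds
  obtain ⟨n, hndef⟩ : ∃ n : ℕ → ℝ, n = fun j => ((A.filter fun p => p.1 = j).card : ℝ) := ⟨_, rfl⟩
  have himgcard : ∀ j : ℕ, ((A.filter fun p => p.1 = j).image Prod.snd).card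
      = (A.filter fun p => p.1 = j).card := by
    intro j
    apply Finset.card_image_of_injOn
    intro p hp q hq hpq
    simp only [Finset.coe_filter, Set.mem_setOf_eq] at hp hq
    exact Prod.ext (hp.2.trans hq.2.symm) hpq
  have himgmem : ∀ j : ℕ, ∀ k ∈ (A.filter fun p => p.1 = j).image Prod.snd,
      k < 2^j ∧ T ≤ |haarCoeff j k f| := by
    intro j k hk
    rw [Finset.mem_image] at hk
    obtain ⟨p, hp, hpk⟩ := hk
    rw [Finset.mem_filter] at hp
    have hpS := (hAS p).1 hp.1
    have : p = (j, k) := Prod.ext hp.2 hpk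
    rw [this] at hpS
    exact hpS
  have hb1 : ∀ j : ℕ, n j ≤ (2:ℝ)^j := by
    intro j
    have : (A.filter fun p => p.1 = j).card ≤ 2^j := by
      rw [← himgcard j]
      calc ((A.filter fun p => p.1 = j).image Prod.snd).card
          ≤ (Finset.range (2^j)).card := by
            apply Finset.card_le_card
            intro k hk
            exact Finset.mem_range.2 (himgmem j k hk).1
        _ = 2^j := Finset.card_range _
    have h' : ((A.filter fun p => p.1 = j).card : ℝ) ≤ ((2^j : ℕ) : ℝ) := by exact_mod_cast this
    push_cast at h'
    rw [hndef]
    exact h'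
  have hb2 : ∀ j : ℕ, n j * (2 * (2:ℝ)^((j:ℝ)/2) * T) ≤ TV := by
    intro j
    have := level_bound hTV hBV j ((A.filter fun p => p.1 = j).image Prod.snd) (himgmem j)
    rw [himgcard j] at this
    rw [hndef]
    exact this
  obtain ⟨q, hqdef⟩ : ∃ q : ℝ, q = (2:ℝ)^(-(1:ℝ)/2) := ⟨_, rfl⟩
  have hq0 : 0 < q := hqdef ▸ Real.rpow_pos_of_pos (by norm_num) _
  have hq1 : q < 1 := hqdef ▸ Real.rpow_lt_one_of_one_lt_of_neg (by norm_num) (by norm_num)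
  have hqsq : q * q = 1/2 := by
    rw [hqdef, ← Real.rpow_add (by norm_num)]
    norm_num
  have hq34 : q ≤ 3/4 := by nlinarith
  have hqinv : ∀ j : ℕ, q^j * (2:ℝ)^((j:ℝ)/2) = 1 := by
    intro j
    rw [hqdef, qpow, ← Real.rpow_add (by norm_num),
      show -(j:ℝ)/2 + (j:ℝ)/2 = 0 by ring, Real.rpow_zero]
  have hb2' : ∀ j : ℕ, n j ≤ r/2 * q^j := by
    intro j
    have hc := rpow_half_pos j
    have hqj : 0 < q^j := pow_pos hq0 j
    have key := hb2 j
    rw [hTVrT] at key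
    -- n j * (2 c T) ≤ r T ; want n j ≤ r/2 * q^j, i.e. n j * (2 c T) ≤ (r/2 q^j) (2 c T) = r T
    have heq : r/2 * q^j * (2 * (2:ℝ)^((j:ℝ)/2) * T) = r * T := by
      have := hqinv j
      nlinarith [hqinv j]
    have hpos : 0 < 2 * (2:ℝ)^((j:ℝ)/2) * T := by positivity
    have key2 : n j * (2 * (2:ℝ)^((j:ℝ)/2) * T) ≤ (r/2 * q^j) * (2 * (2:ℝ)^((j:ℝ)/2) * T) := by
      rw [heq]; exact key
    exact le_of_mul_le_mul_right key2 hpos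
  -- case r < 2 : S empty
  by_cases hr2 : r < 2
  · have hS0 : A.card = 0 := by
      rw [Finset.card_eq_zero]
      ext p
      simp only [Finset.notMem_empty, iff_false]
      intro hp
      have hpS := (hAS p).1 hp
      have h3 := hsing p hpS
      have hc1 : (1:ℝ) ≤ (2:ℝ)^((p.1:ℝ)/2) := Real.one_le_rpow (by norm_num) (by positivity)
      nlinarith
    rw [hS0]
    simp only [Nat.cast_zero]
    positivity
  push_neg at hr2
  -- main case
  obtain ⟨u, hudef⟩ : ∃ u : ℝ, u = r/2 := ⟨_, rfl⟩
  have hu1 : 1 ≤ u := by rw [hudef]; linarith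
  have hu0 : 0 < u := lt_of_lt_of_le one_pos hu1
  have hb2u : ∀ j : ℕ, n j ≤ u * q^j := by
    intro j; rw [hudef]; exact hb2' j
  obtain ⟨ρ, hρdef⟩ : ∃ ρ : ℝ, ρ = u ^ ((2:ℝ)/3) := ⟨_, rfl⟩
  have hρ1 : 1 ≤ ρ := hρdef ▸ Real.one_le_rpow hu1 (by norm_num)
  have hρ0 : 0 < ρ := lt_of_lt_of_le one_pos hρ1
  set M : ℕ := Nat.log 2 ⌈ρ⌉₊ + 1 with hMdef
  have hceil1 : 1 ≤ ⌈ρ⌉₊ := Nat.one_le_ceil_iff.2 hρ0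
  have hM1 : ρ ≤ (2:ℝ)^M := by
    have h1 : (⌈ρ⌉₊ : ℝ) < (2:ℝ)^M := by
      have := Nat.lt_pow_succ_log_self (by norm_num : 1 < 2) ⌈ρ⌉₊
      exact_mod_cast this
    linarith [Nat.le_ceil ρ]
  have hM2 : (2:ℝ)^M ≤ 4*ρ := by
    have h1 : (2:ℕ)^(Nat.log 2 ⌈ρ⌉₊) ≤ ⌈ρ⌉₊ := Nat.pow_log_le_self 2 (by omega)
    have h1' : (2:ℝ)^(Nat.log 2 ⌈ρ⌉₊) ≤ (⌈ρ⌉₊:ℝ) := by exact_mod_cast h1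
    have h2 : (⌈ρ⌉₊:ℝ) < ρ + 1 := Nat.ceil_lt_add_one hρ0.le
    have : (2:ℝ)^M = 2 * (2:ℝ)^(Nat.log 2 ⌈ρ⌉₊) := by rw [hMdef, pow_succ]; ring
    rw [this]
    linarith
  -- split sum
  have hcast : (A.card : ℝ) = ∑ j ∈ Finset.range (2*J), n j := by
    rw [hfiber]; push_cast [hndef]; ring_nf
  rw [hcast]
  have hsplit := Finset.sum_filter_add_sum_filter_not (Finset.range (2*J)) (fun j => j < M) n
  rw [← hsplit]
  -- part 1
  have hpart1 : ∑ j ∈ (Finset.range (2*J)).filter (fun j => j < M), n j ≤ 4*ρ := by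
    calc ∑ j ∈ (Finset.range (2*J)).filter (fun j => j < M), n j
        ≤ ∑ j ∈ (Finset.range (2*J)).filter (fun j => j < M), (2:ℝ)^j :=
          Finset.sum_le_sum (fun j _ => hb1 j)
      _ ≤ ∑ j ∈ Finset.range M, (2:ℝ)^j := by
          apply Finset.sum_le_sum_of_subset_of_nonneg
          · intro j hj
            rw [Finset.mem_filter] at hj
            exact Finset.mem_range.2 hj.2
          · intro j _ _; positivity
      _ = ((2:ℝ)^M - 1)/(2 - 1) := geom_sum_eq (by norm_num) M
      _ ≤ 4*ρ := by rw [show ((2:ℝ) - 1) = 1 by norm_num, div_one]; linarith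
  -- part 2
  have hpart2 : ∑ j ∈ (Finset.range (2*J)).filter (fun j => ¬ j < M), n j ≤ 4*ρ := by
    have step1 : ∑ j ∈ (Finset.range (2*J)).filter (fun j => ¬ j < M), n j
        ≤ ∑ j ∈ Finset.Ico M (2*J + M), u * q^j := by
      calc ∑ j ∈ (Finset.range (2*J)).filter (fun j => ¬ j < M), n j
          ≤ ∑ j ∈ (Finset.range (2*J)).filter (fun j => ¬ j < M), u * q^j :=
            Finset.sum_le_sum (fun j _ => hb2u j)
        _ ≤ ∑ j ∈ Finset.Ico M (2*J + M), u * q^j := by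
            apply Finset.sum_le_sum_of_subset_of_nonneg
            · intro j hj
              rw [Finset.mem_filter, Finset.mem_range] at hj
              rw [Finset.mem_Ico]
              omega
            · intro j _ _; positivity
    have step2 : ∑ j ∈ Finset.Ico M (2*J + M), u * q^j = u * q^M * ∑ i ∈ Finset.range (2*J), q^i := by
      rw [Finset.sum_Ico_eq_sum_range]
      simp only [Nat.add_sub_cancel]
      rw [Finset.mul_sum]
      apply Finset.sum_congr rfl
      intro i _
      rw [pow_add]
      ring
    have step3 : ∑ i ∈ Finset.range (2*J), q^i ≤ 4 := by
      rw [geom_sum_eq (ne_of_lt hq1)]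
      rw [div_le_iff_of_neg (by linarith : q - 1 < 0)]
      have : 0 ≤ q^(2*J) := by positivity
      linarith
    have step4 : u * q^M ≤ ρ := by
      have hqM : q^M = ((2:ℝ)^M) ^ (-(1:ℝ)/2) := by
        rw [hqdef, qpow, ← Real.rpow_natCast (2:ℝ) M, ← Real.rpow_mul (by norm_num)]
        congr 1
        ring
      have h5 : ((2:ℝ)^M) ^ (-(1:ℝ)/2) ≤ ρ ^ (-(1:ℝ)/2) :=
        Real.rpow_le_rpow_of_nonpos hρ0 hM1 (by norm_num)
      have h6 : ρ ^ (-(1:ℝ)/2) = u ^ (-(1:ℝ)/3) := by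
        rw [hρdef, ← Real.rpow_mul hu0.le]
        norm_num
      have h7 : u * u ^ (-(1:ℝ)/3) = ρ := by
        rw [hρdef]
        nth_rewrite 1 [← Real.rpow_one u]
        rw [← Real.rpow_add hu0]
        norm_num
      calc u * q^M = u * ((2:ℝ)^M) ^ (-(1:ℝ)/2) := by rw [hqM]
        _ ≤ u * (ρ ^ (-(1:ℝ)/2)) := by apply mul_le_mul_of_nonneg_left h5 hu0.le
        _ = u * u ^ (-(1:ℝ)/3) := by rw [h6]
        _ = ρ := h7
    calc ∑ j ∈ (Finset.range (2*J)).filter (fun j => ¬ j < M), n j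
        ≤ u * q^M * ∑ i ∈ Finset.range (2*J), q^i := step1.trans (le_of_eq step2)
      _ ≤ ρ * 4 := by
          apply mul_le_mul step4 step3 (Finset.sum_nonneg (fun i _ => pow_nonneg hq0.le i)) hρ0.le
      _ = 4*ρ := by ring
  have hρr : ρ ≤ r ^ ((2:ℝ)/3) := by
    rw [hρdef, hudef]
    apply Real.rpow_le_rpow (by linarith) (by linarith) (by norm_num)
  calc (∑ j ∈ (Finset.range (2*J)).filter (fun j => j < M), n j)
        + ∑ j ∈ (Finset.range (2*J)).filter (fun j => ¬ j < M), n j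
      ≤ 4*ρ + 4*ρ := add_le_add hpart1 hpart2
    _ = 8*ρ := by ring
    _ ≤ 100 * r ^ ((2:ℝ)/3) := by nlinarith
end
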